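/- arXiv:1801.07590 — 4 statements merged into one kernel-verified Lean document; each statement's English description precedes it below -/
import Mathlib

section
/- Let d ≥ 1 and ε > 0. Let g : ℝ^d × ℝ^d → [0,∞] be measurable with respect to the product of the Lebesgue σ-algebra in the first variable and the Borel σ-algebra in the second variable, and ℤ^d-periodic in its second variable. Then ∫_{ℝ^d} g(x, x/ε) dx = ∫_{ℝ^d} ∫_Y g(S_ε(x,y), y) dy dx, as an identity in [0,∞]. -/
/-!
Tile `ℝ^d` by the integer translates `k + Y` of the unit cube. After the change of variables
`x = ε z`, which multiplies both sides by the same Jacobian `ε^d`, the left integrand on the cell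
`k + Y` is `g(ε(k + y), k + y) = g(ε(k + y), y)` by periodicity, while the right integrand is
constant on that cell because `⌊k + z⌋ = k` there. As `Y` has unit volume, each cell contributes
`∫_Y g(ε(k + y), y) dy` to both sides.
-/

open MeasureTheory Set Submodule
open scoped ENNReal

variable {ι : Type*} [Fintype ι]

lemma coe_basisFun_restrictScalars_equivFun_symm (k : ι → ℤ) :
    (((Pi.basisFun ℝ ι).restrictScalars ℤ).equivFun.symm k : ι → ℝ) = fun i => (k i : ℝ) := by
  classical
  ext i
  simp [Module.Basis.equivFun_symm_apply, Finset.sum_apply, Pi.single_apply]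

lemma pi_Ico_ae_eq_pi_Ioo {a b : ι → ℝ} :
    univ.pi (fun i => Ico (a i) (b i)) =ᵐ[volume] univ.pi fun i => Ioo (a i) (b i) :=
  Measure.ae_eq_set_pi fun _ _ => Ioo_ae_eq_Ico.symm

lemma lintegral_eq_tsum_setLIntegral_unitCube (f : (ι → ℝ) → ℝ≥0∞) :
    ∫⁻ x, f x = ∑' k : ι → ℤ,
      ∫⁻ y in univ.pi fun _ : ι => Ioo (0 : ℝ) 1, f (fun i => k i + y i) := by
  -- instance search does not see through `toAddSubgroup`
  have : Countable (span ℤ (range (Pi.basisFun ℝ ι))).toAddSubgroup :=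
    inferInstanceAs (Countable (span ℤ (range (Pi.basisFun ℝ ι))))
  have hfd := ZSpan.isAddFundamentalDomain' (Pi.basisFun ℝ ι) volume
  rw [hfd.lintegral_eq_tsum'', ZSpan.fundamentalDomain_pi_basisFun,
    Measure.restrict_congr_set pi_Ico_ae_eq_pi_Ioo]
  let e : (ι → ℤ) ≃ (span ℤ (range (Pi.basisFun ℝ ι))).toAddSubgroup :=
    ((Pi.basisFun ℝ ι).restrictScalars ℤ).equivFun.symm.toEquiv
  rw [← e.tsum_eq]
  refine tsum_congr fun k => lintegral_congr fun y => ?_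
  exact congrArg (fun v => f (v + y)) (coe_basisFun_restrictScalars_equivFun_symm k)

lemma lintegral_comp_floor (Φ : (ι → ℤ) → ℝ≥0∞) :
    ∫⁻ x : ι → ℝ, Φ (fun i => ⌊x i⌋) = ∑' k, Φ k := by
  rw [lintegral_eq_tsum_setLIntegral_unitCube]
  refine tsum_congr fun k => ?_
  have hfloor : ∀ y ∈ univ.pi fun _ : ι => Ioo (0 : ℝ) 1,
      Φ (fun i => ⌊(k i : ℝ) + y i⌋) = Φ k := fun y hy =>
    congrArg Φ <| funext fun i => by
      rw [Int.floor_intCast_add, Int.floor_eq_zero_iff.2 (Ioo_subset_Ico_self (hy i trivial)),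
        add_zero]
  rw [setLIntegral_congr_fun (MeasurableSet.univ_pi fun _ => measurableSet_Ioo) hfloor,
    setLIntegral_const, Real.volume_pi_Ioo]
  simp

theorem lintegral_diag_eq_lintegral_unfold {F : (ι → ℝ) → (ι → ℝ) → ℝ≥0∞}
    (hF : ∀ x y (k : ι → ℤ), F x (y + fun i => (k i : ℝ)) = F x y) :
    ∫⁻ x, F x x = ∫⁻ x : ι → ℝ, ∫⁻ y in univ.pi fun _ : ι => Ioo (0 : ℝ) 1,
      F (fun i => ⌊x i⌋ + y i) y := by
  rw [lintegral_comp_floor (fun k => ∫⁻ y in univ.pi fun _ : ι => Ioo (0 : ℝ) 1,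
      F (fun i => k i + y i) y), lintegral_eq_tsum_setLIntegral_unitCube]
  refine tsum_congr fun k => lintegral_congr fun y => ?_
  rw [← hF _ y k]
  congr 1
  exact add_comm _ _

lemma lintegral_eq_mul_lintegral_comp_smul {E : Type*} [NormedAddCommGroup E] [NormedSpace ℝ E]
    [MeasurableSpace E] [BorelSpace E] [FiniteDimensional ℝ E] (μ : Measure E)
    [μ.IsAddHaarMeasure] {r : ℝ} (hr : r ≠ 0) (f : E → ℝ≥0∞) :
    ∫⁻ x, f x ∂μ = ENNReal.ofReal |r ^ Module.finrank ℝ E| * ∫⁻ x, f (r • x) ∂μ := by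
  have hemb : MeasurableEmbedding (r • · : E → E) :=
    (Homeomorph.smulOfNeZero r hr).toMeasurableEquiv.measurableEmbedding
  rw [← hemb.lintegral_map, Measure.map_addHaar_smul μ hr, lintegral_smul_measure, smul_eq_mul,
    ← mul_assoc, ← ENNReal.ofReal_mul (abs_nonneg _), ← abs_mul,
    mul_inv_cancel₀ (pow_ne_zero _ hr), abs_one, ENNReal.ofReal_one, one_mul]

theorem twoScale_unfolding_identity_general
    (d : ℕ) (ε : ℝ) (hε : 0 < ε)
    (g : (Fin d → ℝ) → (Fin d → ℝ) → ENNReal)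
    (hper : ∀ (x y : Fin d → ℝ) (k : Fin d → ℤ),
      g x (y + fun i => (k i : ℝ)) = g x y) :
    ∫⁻ x, g x (fun i => x i / ε)
      = ∫⁻ x : Fin d → ℝ, ∫⁻ y in univ.pi fun _ : Fin d => Ioo (0 : ℝ) 1,
          g (fun i => ε * ((⌊x i / ε⌋ : ℝ) + y i)) y := by
  have hdiv (x : Fin d → ℝ) (i : Fin d) : (ε • x) i / ε = x i :=
    mul_div_cancel_left₀ (x i) hε.ne'
  conv_lhs => rw [lintegral_eq_mul_lintegral_comp_smul volume hε.ne']
  conv_rhs => rw [lintegral_eq_mul_lintegral_comp_smul volume hε.ne']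
  simp only [hdiv]
  congr 1
  exact lintegral_diag_eq_lintegral_unfold (F := fun x y => g (ε • x) y) fun x y k => hper _ y k

/-- **Periodic unfolding identity** (paper's Lemma 2.1).
For `g : ℝ^d × ℝ^d → [0,∞]` measurable with respect to the product of the Lebesgue
σ-algebra (first variable) and the Borel σ-algebra (second variable), and `ℤ^d`-periodic
in the second variable, one has
`∫_{ℝ^d} g(x, x/ε) dx = ∫_{ℝ^d} ∫_Y g(S_ε(x,y), y) dy dx` in `[0,∞]`,
where `Y = (0,1)^d` and `S_ε(x,y) = ε(⌊x/ε⌋ + y)`. -/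
theorem twoScale_unfolding_identity
    (d : ℕ) (hd : 1 ≤ d) (ε : ℝ) (hε : 0 < ε)
    (g : (Fin d → ℝ) → (Fin d → ℝ) → ENNReal)
    (hmeas : @Measurable ((Fin d → ℝ) × (Fin d → ℝ)) ENNReal
      (MeasurableSpace.prod
        (inferInstanceAs (MeasurableSpace (NullMeasurableSpace (Fin d → ℝ) volume)))
        inferInstance)
      inferInstance
      (fun p => g p.1 p.2))
    (hper : ∀ (x y : Fin d → ℝ) (k : Fin d → ℤ),
      g x (y + fun i => (k i : ℝ)) = g x y) :
    ∫⁻ x, g x (fun i => x i / ε)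
      = ∫⁻ x : Fin d → ℝ, ∫⁻ y in univ.pi fun _ : Fin d => Ioo (0 : ℝ) 1,
          g (fun i => ε * ((⌊x i / ε⌋ : ℝ) + y i)) y :=
  twoScale_unfolding_identity_general d ε hε g hper
end

section
/- Let d ≥ 1, Ω ⊂ ℝ^d a bounded open set, and (ε_k) a sequence of positive numbers with ε_k → 0. For each k let v_k ∈ L¹(ℝ^d) vanish outside Ω and assume that the unfolded sequence (x,y) ↦ v_k(S_{ε_k}(x,y)) converges weakly in L¹(ℝ^d × Y) to v⁰. Then for every smooth function ψ : ℝ^d × ℝ^d → ℝ that is compactly supported in Ω in its first variable and ℤ^d-periodic in its second variable, ∫_{ℝ^d} v_k(x) ψ(x, x/ε_k) dx → ∫_{ℝ^d} ∫_Y v⁰(x,y) ψ(x,y) dy dx as k → ∞. -/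
open MeasureTheory Set Filter Topology
open scoped ENNReal NNReal

/-- The unit cell `Y = (0,1)^d`. -/
def unitCell (d : ℕ) : Set (Fin d → ℝ) := univ.pi fun _ => Ioo (0 : ℝ) 1

/-- The two-scale composition map `S_ε(x,y) = ε(⌊x/ε⌋ + y)`. -/
noncomputable def twoScale {d : ℕ} (ε : ℝ) (x y : Fin d → ℝ) : Fin d → ℝ :=
  fun i => ε * ((⌊x i / ε⌋ : ℝ) + y i)


lemma measurable_twoScale {d : ℕ} (ε : ℝ) :
    Measurable (fun p : (Fin d → ℝ) × (Fin d → ℝ) => twoScale ε p.1 p.2) := by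
  unfold twoScale
  refine measurable_pi_lambda _ fun i => ?_
  have h1 : Measurable fun p : (Fin d → ℝ) × (Fin d → ℝ) => (⌊p.1 i / ε⌋ : ℝ) :=
    measurable_from_top.comp ((by fun_prop :
      Measurable fun p : (Fin d → ℝ) × (Fin d → ℝ) => p.1 i / ε)).floor
  exact measurable_const.mul (h1.add ((measurable_pi_apply i).comp measurable_snd))

lemma measurableSet_unitCell {d : ℕ} : MeasurableSet (unitCell d) :=
  MeasurableSet.univ_pi fun _ => measurableSet_Ioo

lemma measurePreserving_twoScale {d : ℕ} {ε : ℝ} (hε : 0 < ε) :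
    MeasurePreserving (fun p : (Fin d → ℝ) × (Fin d → ℝ) => twoScale ε p.1 p.2)
      ((volume : Measure (Fin d → ℝ)).prod (volume.restrict (unitCell d))) volume := by
  classical
  refine ⟨measurable_twoScale ε, ?_⟩
  ext s hs
  rw [Measure.map_apply (measurable_twoScale ε) hs,
    Measure.prod_apply ((measurable_twoScale ε) hs)]
  -- cubes in x
  set C : (Fin d → ℤ) → Set (Fin d → ℝ) :=
    fun ξ => univ.pi fun i => Ico (ε * ξ i) (ε * (ξ i + 1)) with hC
  have hmemC : ∀ (ξ : Fin d → ℤ) (x : Fin d → ℝ), x ∈ C ξ ↔ ∀ i, ⌊x i / ε⌋ = ξ i := by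
    intro ξ x
    simp only [hC, Set.mem_univ_pi, mem_Ico]
    refine forall_congr' fun i => ?_
    rw [Int.floor_eq_iff, le_div_iff₀' hε, div_lt_iff₀' hε]
  have hCmeas : ∀ ξ, MeasurableSet (C ξ) :=
    fun ξ => MeasurableSet.univ_pi fun i => measurableSet_Ico
  have hCcover : (⋃ ξ, C ξ) = univ := by
    refine eq_univ_of_forall fun x => mem_iUnion.2 ⟨fun i => ⌊x i / ε⌋, ?_⟩
    rw [hmemC]; intro i; rfl
  have hCdisj : Pairwise (Function.onFun Disjoint C) := by
    intro ξ ξ' hne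
    refine Set.disjoint_left.2 fun x hx hx' => hne ?_
    funext i
    rw [← (hmemC ξ x).1 hx i, ← (hmemC ξ' x).1 hx' i]
  -- open cubes (images)
  set D : (Fin d → ℤ) → Set (Fin d → ℝ) :=
    fun ξ => univ.pi fun i => Ioo (ε * ξ i) (ε * ξ i + ε) with hD
  have hDmeas : ∀ ξ, MeasurableSet (D ξ) :=
    fun ξ => MeasurableSet.univ_pi fun i => measurableSet_Ioo
  -- affine maps
  set m : (Fin d → ℤ) → (Fin d → ℝ) → (Fin d → ℝ) :=
    fun ξ y => fun i => ε * ((ξ i : ℝ) + y i) with hm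
  have hmae : ∀ ξ, m ξ = (fun z => z + fun i => ε * (ξ i : ℝ)) ∘ (fun y => ε • y) := by
    intro ξ; funext y; funext i
    simp [hm, smul_eq_mul]; ring
  have hmpre : ∀ (ξ) (B : Set (Fin d → ℝ)),
      volume (m ξ ⁻¹' B) = ENNReal.ofReal ((ε ^ d)⁻¹) * volume B := by
    intro ξ B
    rw [hmae ξ, Set.preimage_comp, Measure.addHaar_preimage_smul volume (ne_of_gt hε),
      measure_preimage_add_right]
    congr 1
    rw [abs_of_nonneg (by positivity), Module.finrank_fin_fun]
  have hmY : ∀ ξ, m ξ ⁻¹' (D ξ) = unitCell d := by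
    intro ξ
    ext y
    simp only [hD, mem_preimage, Set.mem_univ_pi, mem_Ioo, unitCell, hm]
    refine forall_congr' fun i => ?_
    constructor
    · rintro ⟨h1, h2⟩
      constructor
      · nlinarith
      · nlinarith
    · rintro ⟨h1, h2⟩
      constructor
      · nlinarith
      · nlinarith
  -- the inner measure function
  have hconst : ∀ (ξ : Fin d → ℤ), ∀ x ∈ C ξ,
      (volume.restrict (unitCell d))
        (Prod.mk x ⁻¹' ((fun p : (Fin d → ℝ) × (Fin d → ℝ) => twoScale ε p.1 p.2) ⁻¹' s))
        = volume (s ∩ D ξ) * ENNReal.ofReal ((ε ^ d)⁻¹) := by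
    intro ξ x hx
    have hpre : (Prod.mk x ⁻¹'
        ((fun p : (Fin d → ℝ) × (Fin d → ℝ) => twoScale ε p.1 p.2) ⁻¹' s)) = m ξ ⁻¹' s := by
      ext y
      simp only [mem_preimage, hm]
      have : twoScale ε x y = fun i => ε * ((ξ i : ℝ) + y i) := by
        funext i; unfold twoScale; rw [(hmemC ξ x).1 hx i]
      rw [this]
    have hmmeas : Measurable (m ξ) := by
      refine measurable_pi_lambda _ fun i => ?_
      exact measurable_const.mul (measurable_const.add (measurable_pi_apply i))
    rw [hpre, Measure.restrict_apply (hmmeas hs)]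
    have : m ξ ⁻¹' s ∩ unitCell d = m ξ ⁻¹' (s ∩ D ξ) := by
      rw [Set.preimage_inter, hmY ξ]
    rw [this, hmpre, mul_comm]
  -- decompose the lintegral over the cubes C ξ
  rw [← setLIntegral_univ, ← hCcover, lintegral_iUnion hCmeas hCdisj]
  have hvolC : ∀ ξ, volume (C ξ) = ENNReal.ofReal (ε ^ d) := by
    intro ξ
    rw [hC]
    rw [volume_pi_pi]
    have : ∀ i : Fin d, volume (Ico (ε * (ξ i : ℝ)) (ε * ((ξ i : ℝ) + 1)))
        = ENNReal.ofReal ε := by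
      intro i
      rw [Real.volume_Ico]
      congr 1
      ring
    simp only [this, Finset.prod_const, Finset.card_univ, Fintype.card_fin]
    rw [← ENNReal.ofReal_pow hε.le]
  have hterm : ∀ ξ, ∫⁻ x in C ξ,
      (volume.restrict (unitCell d))
        (Prod.mk x ⁻¹' ((fun p : (Fin d → ℝ) × (Fin d → ℝ) => twoScale ε p.1 p.2) ⁻¹' s))
      = volume (s ∩ D ξ) := by
    intro ξ
    rw [setLIntegral_congr_fun_ae (hCmeas ξ) (Filter.Eventually.of_forall (hconst ξ)),
      setLIntegral_const, hvolC ξ, mul_assoc, ← ENNReal.ofReal_mul (by positivity),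
      inv_mul_cancel₀ (by positivity), ENNReal.ofReal_one, mul_one]
  simp only [hterm]
  -- sum the measures of the disjoint pieces
  have hDdisj : Pairwise (Function.onFun Disjoint fun ξ => s ∩ D ξ) := by
    have hmemD : ∀ (ξ : Fin d → ℤ) (x : Fin d → ℝ), x ∈ D ξ → ∀ i, ⌊x i / ε⌋ = ξ i := by
      intro ξ x hx i
      have h := hx i (mem_univ i)
      simp only [mem_Ioo] at h
      have h1 : (ξ i : ℝ) ≤ x i / ε := by
        rw [le_div_iff₀' hε]; exact h.1.le
      have h2 : x i / ε < (ξ i : ℝ) + 1 := by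
        rw [div_lt_iff₀' hε]; linarith [h.2]
      exact Int.floor_eq_iff.2 ⟨h1, h2⟩
    intro ξ ξ' hne
    refine Set.disjoint_left.2 fun x hx hx' => hne ?_
    funext i
    rw [← hmemD ξ x hx.2 i, ← hmemD ξ' x hx'.2 i]
  rw [← measure_iUnion hDdisj fun ξ => hs.inter (hDmeas ξ), ← Set.inter_iUnion]
  -- complement of the union of open cubes is null
  have hnull : volume ((⋃ ξ, D ξ)ᶜ) = 0 := by
    have hsub : (⋃ ξ, D ξ)ᶜ ⊆ ⋃ (i : Fin d), ⋃ (n : ℤ), {x : Fin d → ℝ | x i = ε * n} := by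
      intro x hx
      simp only [mem_compl_iff, mem_iUnion, not_exists] at hx
      have := hx (fun i => ⌊x i / ε⌋)
      simp only [hD, Set.mem_univ_pi, mem_Ioo, not_forall] at this
      obtain ⟨i, hi⟩ := this
      have hlow : ε * (⌊x i / ε⌋ : ℝ) ≤ x i := by
        rw [← le_div_iff₀' hε]; exact Int.floor_le _
      have hhigh : x i < ε * (⌊x i / ε⌋ : ℝ) + ε := by
        have := Int.lt_floor_add_one (x i / ε)
        rw [div_lt_iff₀' hε] at this
        linarith [this]
      simp only [mem_iUnion]
      refine ⟨i, ⌊x i / ε⌋, ?_⟩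
      have : ¬ (ε * (⌊x i / ε⌋ : ℝ) < x i) := fun hlt => hi ⟨hlt, hhigh⟩
      simp only [mem_setOf_eq]
      linarith [not_lt.1 this, hlow]
    refine measure_mono_null hsub (measure_iUnion_null fun i => measure_iUnion_null fun n => ?_)
    exact Measure.pi_hyperplane (fun _ => (volume : Measure ℝ)) i (ε * n)
  refine le_antisymm (measure_mono Set.inter_subset_left) ?_
  calc volume s ≤ volume (s ∩ ⋃ ξ, D ξ) + volume (s \ ⋃ ξ, D ξ) :=
        measure_le_inter_add_diff _ _ _
    _ = volume (s ∩ ⋃ ξ, D ξ) := by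
        have h0 : volume (s \ ⋃ ξ, D ξ) = 0 :=
          measure_mono_null (fun x hx => hx.2) hnull
        rw [h0, add_zero]
    _ ≤ volume (s ∩ ⋃ ξ, D ξ) := le_rfl


lemma psi_aux {d : ℕ} (ψ : (Fin d → ℝ) → (Fin d → ℝ) → ℝ)
    (hcont : Continuous fun p : (Fin d → ℝ) × (Fin d → ℝ) => ψ p.1 p.2)
    (K : Set (Fin d → ℝ)) (hK : IsCompact K) (hzero : ∀ x ∉ K, ∀ y, ψ x y = 0) :
    ∃ H : ((Fin d → ℝ) × (Fin d → ℝ)) → ℝ,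
      UniformContinuous H ∧ (∃ C, ∀ q, |H q| ≤ C) ∧
      ∀ (x y : Fin d → ℝ), y ∈ Set.Icc (0 : Fin d → ℝ) 1 → H (x, y) = ψ x y := by
  classical
  set Q : Set (Fin d → ℝ) := Set.Icc 0 1 with hQ
  have hQne : Q.Nonempty := ⟨0, by simp [hQ, Set.mem_Icc]⟩
  have hQbdd : ∀ z ∈ Q, ‖z‖ ≤ 1 := by
    intro z hz
    rw [pi_norm_le_iff_of_nonneg (by norm_num)]
    intro i
    have h1 := hz.1 i
    have h2 := hz.2 i
    simp only [Pi.zero_apply, Pi.one_apply] at h1 h2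
    rw [Real.norm_eq_abs, abs_le]
    exact ⟨by linarith, h2⟩
  set θ : (Fin d → ℝ) → ℝ := fun y => max (1 - Metric.infDist y Q) 0 with hθ
  have hθcont : Continuous θ :=
    ((continuous_const.sub (Metric.continuous_infDist_pt Q)).max continuous_const)
  set H : ((Fin d → ℝ) × (Fin d → ℝ)) → ℝ := fun q => ψ q.1 q.2 * θ q.2 with hH
  have hHcont : Continuous H := hcont.mul (hθcont.comp continuous_snd)
  set C2 : Set (Fin d → ℝ) := {y | Metric.infDist y Q ≤ 1} with hC2
  have hC2comp : IsCompact C2 := by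
    refine Metric.isCompact_of_isClosed_isBounded
      (isClosed_le (Metric.continuous_infDist_pt Q) continuous_const) ?_
    rw [Metric.isBounded_iff_subset_closedBall 0]
    refine ⟨2, fun y hy => ?_⟩
    obtain ⟨z, hzQ, hzd⟩ := (isCompact_Icc).exists_infDist_eq_dist hQne y
    simp only [Metric.mem_closedBall]
    have h1 : dist y z ≤ 1 := by rw [← hzd]; exact hy
    calc dist y 0 ≤ dist y z + dist z 0 := dist_triangle _ _ _
      _ ≤ 1 + 1 := by
          refine add_le_add h1 ?_
          rw [dist_zero_right]
          exact hQbdd z hzQ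
      _ = 2 := by norm_num
  have hHsupp : HasCompactSupport H := by
    refine HasCompactSupport.intro (hK.prod hC2comp) fun q hq => ?_
    simp only [Set.mem_prod, not_and_or] at hq
    rcases hq with h | h
    · simp [hH, hzero q.1 h q.2]
    · have : ¬ Metric.infDist q.2 Q ≤ 1 := h
      have hθ0 : θ q.2 = 0 := by
        rw [hθ]
        simp only [max_eq_right_iff]
        linarith [not_le.1 this]
      simp [hH, hθ0]
  refine ⟨H, hHsupp.uniformContinuous_of_continuous hHcont, ?_, ?_⟩
  · obtain ⟨C, hC⟩ := isBounded_iff_forall_norm_le.1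
      (hHsupp.isCompact_range hHcont).isBounded
    exact ⟨C, fun q => by
      have := hC (H q) (Set.mem_range_self q)
      rwa [Real.norm_eq_abs] at this⟩
  · intro x y hy
    have : θ y = 1 := by
      have hyQ : y ∈ Q := hy
      have h0 : Metric.infDist y Q = 0 := Metric.infDist_zero_of_mem hyQ
      simp only [hθ, h0]
      norm_num
    simp [hH, this]


lemma uniform_l1_bound {α : Type*} [MeasurableSpace α] (μ : Measure α)
    (u : ℕ → α → ℝ) (hu : ∀ k, Integrable (u k) μ)
    (hconv : ∀ φ : α → ℝ, Measurable φ → (∃ C, ∀ᵐ p ∂μ, |φ p| ≤ C) →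
      ∃ L, Tendsto (fun k => ∫ p, u k p * φ p ∂μ) atTop (𝓝 L)) :
    ∃ M, ∀ k, ∫ p, |u k p| ∂μ ≤ M := by
  classical
  haveI : Fact ((1 : ℝ≥0∞) ≤ ⊤) := ⟨le_top⟩
  -- ae bound for L∞ elements
  have hb : ∀ φ : Lp ℝ ⊤ μ, ∀ᵐ p ∂μ, ‖φ p‖ ≤ ‖φ‖ := by
    intro φ
    have h1 : ∀ᵐ p ∂μ, (‖φ p‖₊ : ℝ≥0∞) ≤ eLpNorm φ ⊤ μ := by
      rw [eLpNorm_exponent_top]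
      exact ae_le_eLpNormEssSup
    filter_upwards [h1] with p hp
    have hfin : eLpNorm (⇑φ) ⊤ μ ≠ ⊤ := Lp.eLpNorm_ne_top φ
    have := ENNReal.toReal_mono hfin hp
    simpa [Lp.norm_def] using this
  have hint : ∀ (k) (φ : Lp ℝ ⊤ μ), Integrable (fun p => u k p * φ p) μ := by
    intro k φ
    have := (hu k).bdd_mul (Lp.aestronglyMeasurable φ) (hb φ)
    simpa [mul_comm] using this
  -- the functionals
  set T : ℕ → (Lp ℝ ⊤ μ) →L[ℝ] ℝ := fun k =>
    LinearMap.mkContinuous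
      { toFun := fun φ => ∫ p, u k p * φ p ∂μ
        map_add' := by
          intro φ φ'
          have hae : ⇑(φ + φ') =ᵐ[μ] ⇑φ + ⇑φ' := Lp.coeFn_add φ φ'
          have : ∫ p, u k p * (φ + φ') p ∂μ = ∫ p, (u k p * φ p + u k p * φ' p) ∂μ := by
            refine integral_congr_ae (hae.mono fun p hp => ?_)
            simp only [hp, Pi.add_apply]
            ring
          rw [this, integral_add (hint k φ) (hint k φ')]
        map_smul' := by
          intro c φ
          have hae : ⇑(c • φ) =ᵐ[μ] c • ⇑φ := Lp.coeFn_smul c φ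
          have : ∫ p, u k p * (c • φ) p ∂μ = ∫ p, c • (u k p * φ p) ∂μ := by
            refine integral_congr_ae (hae.mono fun p hp => ?_)
            simp only [hp, Pi.smul_apply, smul_eq_mul]
            ring
          rw [this, integral_smul]
          rfl }
      (∫ p, |u k p| ∂μ)
      (by
        intro φ
        simp only [LinearMap.coe_mk, AddHom.coe_mk]
        calc ‖∫ p, u k p * φ p ∂μ‖ ≤ ∫ p, ‖u k p * φ p‖ ∂μ :=
              norm_integral_le_integral_norm _
          _ ≤ ∫ p, |u k p| * ‖φ‖ ∂μ := by
              refine integral_mono_ae (hint k φ).norm ((hu k).abs.mul_const _) ?_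
              filter_upwards [hb φ] with p hp
              rw [norm_mul]
              exact mul_le_mul_of_nonneg_left hp (abs_nonneg _)
          _ = (∫ p, |u k p| ∂μ) * ‖φ‖ := integral_mul_const _ _) with hT
  have hTapp : ∀ (k) (φ : Lp ℝ ⊤ μ), T k φ = ∫ p, u k p * φ p ∂μ := fun k φ => rfl
  -- pointwise boundedness
  have hptwise : ∀ φ : Lp ℝ ⊤ μ, ∃ C, ∀ k, ‖T k φ‖ ≤ C := by
    intro φ
    set w := (Lp.aestronglyMeasurable φ).mk φ with hw
    have hwmeas : Measurable w := (Lp.aestronglyMeasurable φ).stronglyMeasurable_mk.measurable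
    have hwae : ⇑φ =ᵐ[μ] w := (Lp.aestronglyMeasurable φ).ae_eq_mk
    have hwb : ∀ᵐ p ∂μ, |w p| ≤ ‖φ‖ := by
      filter_upwards [hb φ, hwae] with p hp hpe
      rw [← hpe]
      simpa using hp
    obtain ⟨L, hL⟩ := hconv w hwmeas ⟨‖φ‖, hwb⟩
    have heq : ∀ k, T k φ = ∫ p, u k p * w p ∂μ := by
      intro k
      rw [hTapp]
      refine integral_congr_ae (hwae.mono fun p hp => ?_)
      dsimp only
      rw [hp]
    have hL' : Tendsto (fun k => T k φ) atTop (𝓝 L) := by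
      simp only [heq]; exact hL
    obtain ⟨C, hC⟩ := (hL'.abs).bddAbove_range
    exact ⟨C, fun k => by
      have := hC (Set.mem_range_self (f := fun k => |T k φ|) k)
      simpa [Real.norm_eq_abs] using this⟩
  obtain ⟨C', hC'⟩ := banach_steinhaus hptwise
  refine ⟨C', fun k => ?_⟩
  -- test against the sign of u k
  set w := (hu k).aestronglyMeasurable.mk (u k) with hw
  have hwmeas : Measurable w := (hu k).aestronglyMeasurable.stronglyMeasurable_mk.measurable
  have hwae : u k =ᵐ[μ] w := (hu k).aestronglyMeasurable.ae_eq_mk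
  set s : α → ℝ := fun p => if w p ≤ 0 then -1 else 1 with hs
  have hsmeas : Measurable s := Measurable.ite (measurableSet_le hwmeas measurable_const)
    measurable_const measurable_const
  have hsb : ∀ p, ‖s p‖ ≤ 1 := by
    intro p
    rw [hs]
    dsimp only
    split <;> simp
  have hsmem : MemLp s ⊤ μ := memLp_top_of_bound hsmeas.aestronglyMeasurable 1
    (Filter.Eventually.of_forall hsb)
  set φs : Lp ℝ ⊤ μ := hsmem.toLp s with hφs
  have hφsnorm : ‖φs‖ ≤ 1 := by
    rw [hφs, Lp.norm_toLp]
    have h1 : eLpNorm s ⊤ μ ≤ ENNReal.ofReal 1 := by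
      rw [eLpNorm_exponent_top]
      exact eLpNormEssSup_le_of_ae_bound (Filter.Eventually.of_forall hsb)
    calc (eLpNorm s ⊤ μ).toReal ≤ (ENNReal.ofReal 1).toReal :=
          ENNReal.toReal_mono (by simp) h1
      _ = 1 := by simp
  have hval : T k φs = ∫ p, |u k p| ∂μ := by
    have h1 : T k φs = ∫ p, u k p * s p ∂μ := by
      rw [hTapp]
      refine integral_congr_ae ((hsmem.coeFn_toLp).mono fun p hp => ?_)
      exact congrArg (u k p * ·) hp
    rw [h1]
    have h2 : ∫ p, u k p * s p ∂μ = ∫ p, w p * s p ∂μ :=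
      integral_congr_ae (hwae.mono fun p hp => by dsimp only; rw [hp])
    have h3 : ∀ p, w p * s p = |w p| := by
      intro p
      rw [hs]
      dsimp only
      rcases le_or_gt (w p) 0 with h | h
      · rw [if_pos h, abs_of_nonpos h]; ring
      · rw [if_neg (not_le.2 h), abs_of_pos h]; ring
    have h4 : ∫ p, |u k p| ∂μ = ∫ p, |w p| ∂μ :=
      integral_congr_ae (hwae.mono fun p hp => by dsimp only; rw [hp])
    rw [h2, h4]
    exact integral_congr_ae (Filter.Eventually.of_forall fun p => h3 p)
  calc ∫ p, |u k p| ∂μ = T k φs := hval.symm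
    _ ≤ ‖T k φs‖ := le_abs_self _
    _ ≤ ‖T k‖ * ‖φs‖ := (T k).le_opNorm φs
    _ ≤ C' * 1 := by
        refine mul_le_mul (hC' k) hφsnorm (norm_nonneg _) ?_
        exact le_trans (norm_nonneg _) (hC' k)
    _ = C' := mul_one _


/-- **Testing weak two-scale convergence against oscillating smooth test functions**
(item (iv) of the paper's Lemma 2.2). If `v_k ∈ L¹(ℝ^d)` vanish outside a bounded open
`Ω` and the unfolded sequence converges weakly in `L¹(ℝ^d × Y)` to `v⁰`, then for every
smooth `ψ(x,y)`, compactly supported in `Ω` in `x` and `ℤ^d`-periodic in `y`,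
`∫ v_k(x) ψ(x, x/ε_k) dx → ∫∫ v⁰(x,y) ψ(x,y) dy dx`. -/
theorem twoScale_weak_convergence_test_oscillating
    (d : ℕ) (hd : 1 ≤ d) (Ω : Set (Fin d → ℝ)) (hΩo : IsOpen Ω)
    (hΩb : Bornology.IsBounded Ω)
    (ε : ℕ → ℝ) (hεpos : ∀ k, 0 < ε k) (hε0 : Tendsto ε atTop (𝓝 0))
    (v : ℕ → (Fin d → ℝ) → ℝ)
    (hvInt : ∀ k, Integrable (v k))
    (hv0out : ∀ k, ∀ x ∉ Ω, v k x = 0)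
    (v0 : (Fin d → ℝ) → (Fin d → ℝ) → ℝ)
    (hunfInt : ∀ k, Integrable (fun p : (Fin d → ℝ) × (Fin d → ℝ) =>
      v k (twoScale (ε k) p.1 p.2)) (volume.prod (volume.restrict (unitCell d))))
    (hv0Int : Integrable (fun p : (Fin d → ℝ) × (Fin d → ℝ) => v0 p.1 p.2)
      (volume.prod (volume.restrict (unitCell d))))
    (hweak : ∀ φ : (Fin d → ℝ) × (Fin d → ℝ) → ℝ, Measurable φ →
      (∃ C, ∀ᵐ p ∂(volume.prod (volume.restrict (unitCell d))), |φ p| ≤ C) →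
      Tendsto
        (fun k => ∫ p, v k (twoScale (ε k) p.1 p.2) * φ p
          ∂(volume.prod (volume.restrict (unitCell d)))) atTop
        (𝓝 (∫ p, v0 p.1 p.2 * φ p ∂(volume.prod (volume.restrict (unitCell d))))))
    (ψ : (Fin d → ℝ) → (Fin d → ℝ) → ℝ)
    (hψsmooth : ContDiff ℝ (⊤ : ℕ∞) (fun p : (Fin d → ℝ) × (Fin d → ℝ) => ψ p.1 p.2))
    (hψsupp : ∃ K : Set (Fin d → ℝ), IsCompact K ∧ K ⊆ Ω ∧
      ∀ x ∉ K, ∀ y, ψ x y = 0)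
    (hψper : ∀ (x y : Fin d → ℝ) (k : Fin d → ℤ),
      ψ x (y + fun i => (k i : ℝ)) = ψ x y) :
    Tendsto (fun k => ∫ x, v k x * ψ x (fun i => x i / ε k)) atTop
      (𝓝 (∫ x, ∫ y in unitCell d, v0 x y * ψ x y)) := by
  classical
  set μ := (volume : Measure (Fin d → ℝ)).prod (volume.restrict (unitCell d)) with hμ
  obtain ⟨K, hKcomp, hKsub, hKzero⟩ := hψsupp
  have hψcont : Continuous fun p : (Fin d → ℝ) × (Fin d → ℝ) => ψ p.1 p.2 :=
    hψsmooth.continuous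
  obtain ⟨H, hHuc, ⟨CH, hCH⟩, hHeq⟩ := psi_aux ψ hψcont K hKcomp hKzero
  -- a.e. the second coordinate is in the unit cell
  have haeY : ∀ᵐ p ∂μ, p.2 ∈ unitCell d := by
    rw [ae_iff]
    have hset : {p : (Fin d → ℝ) × (Fin d → ℝ) | ¬ p.2 ∈ unitCell d}
        = univ ×ˢ (unitCell d)ᶜ := by
      ext p; simp [Set.mem_prod]
    rw [hset, hμ, Measure.prod_prod, Measure.restrict_apply (measurableSet_unitCell.compl)]
    simp
  have hIccY : ∀ y ∈ unitCell d, y ∈ Set.Icc (0 : Fin d → ℝ) 1 := by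
    intro y hy
    constructor
    · intro i; exact (hy i (mem_univ i)).1.le
    · intro i; exact (hy i (mem_univ i)).2.le
  -- a.e. bound for ψ in both forms
  have hψb : ∀ᵐ p ∂μ, |ψ p.1 p.2| ≤ CH := by
    filter_upwards [haeY] with p hp
    rw [← hHeq p.1 p.2 (hIccY _ hp)]
    exact hCH _
  have hφmeas : Measurable fun p : (Fin d → ℝ) × (Fin d → ℝ) => ψ p.1 p.2 :=
    hψcont.measurable
  -- convergence of the fixed-test-function part
  have hbconv := hweak (fun p => ψ p.1 p.2) hφmeas ⟨CH, hψb⟩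
  -- identify the limit with the iterated integral
  have hv0ψInt : Integrable (fun p : (Fin d → ℝ) × (Fin d → ℝ) => v0 p.1 p.2 * ψ p.1 p.2) μ := by
    have := hv0Int.bdd_mul hψcont.aestronglyMeasurable
      (hψb.mono fun p hp => by rwa [Real.norm_eq_abs])
    simpa [mul_comm] using this
  have hRHS : ∫ p, v0 p.1 p.2 * ψ p.1 p.2 ∂μ = ∫ x, ∫ y in unitCell d, v0 x y * ψ x y :=
    integral_prod _ hv0ψInt
  -- measure preserving unfolding
  have hmp : ∀ k, MeasurePreserving (fun p : (Fin d → ℝ) × (Fin d → ℝ) =>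
      twoScale (ε k) p.1 p.2) μ volume := fun k => measurePreserving_twoScale (hεpos k)
  -- unfold the oscillating integral
  have hLHS : ∀ k, ∫ x, v k x * ψ x (fun i => x i / ε k)
      = ∫ p, v k (twoScale (ε k) p.1 p.2) * ψ (twoScale (ε k) p.1 p.2) p.2 ∂μ := by
    intro k
    have hcd : Continuous fun x : Fin d → ℝ => ψ x (fun i => x i / ε k) := by
      have : Continuous fun x : Fin d → ℝ =>
          (x, fun i => x i / ε k) := by
        refine continuous_id.prodMk (continuous_pi fun i => ?_)
        exact (continuous_apply i).div_const _
      exact hψcont.comp this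
    have hfm : AEStronglyMeasurable (fun x => v k x * ψ x (fun i => x i / ε k))
        (volume : Measure (Fin d → ℝ)) :=
      (hvInt k).aestronglyMeasurable.mul hcd.aestronglyMeasurable
    have hfm' : AEStronglyMeasurable (fun x => v k x * ψ x (fun i => x i / ε k))
        (Measure.map (fun p : (Fin d → ℝ) × (Fin d → ℝ) => twoScale (ε k) p.1 p.2) μ) := by
      rw [(hmp k).map_eq]; exact hfm
    have h1 : ∫ x, v k x * ψ x (fun i => x i / ε k)
        = ∫ p, v k (twoScale (ε k) p.1 p.2)
            * ψ (twoScale (ε k) p.1 p.2) (fun i => twoScale (ε k) p.1 p.2 i / ε k) ∂μ := by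
      rw [← integral_map (hmp k).measurable.aemeasurable hfm', (hmp k).map_eq]
    rw [h1]
    refine integral_congr_ae (Filter.Eventually.of_forall fun p => ?_)
    dsimp only
    have harg : (fun i => twoScale (ε k) p.1 p.2 i / ε k)
        = p.2 + fun i => ((⌊p.1 i / ε k⌋ : ℤ) : ℝ) := by
      funext i
      unfold twoScale
      rw [mul_div_cancel_left₀ _ (hεpos k).ne']
      simp [add_comm]
    rw [harg, hψper]
  -- integrability of both product integrands
  have hψTb : ∀ k, ∀ᵐ p ∂μ, ‖ψ (twoScale (ε k) p.1 p.2) p.2‖ ≤ CH := by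
    intro k
    filter_upwards [haeY] with p hp
    rw [Real.norm_eq_abs, ← hHeq _ p.2 (hIccY _ hp)]
    exact hCH _
  have hψTm : ∀ k, AEStronglyMeasurable
      (fun p : (Fin d → ℝ) × (Fin d → ℝ) => ψ (twoScale (ε k) p.1 p.2) p.2) μ := by
    intro k
    exact (hψcont.measurable.comp
      ((measurable_twoScale (ε k)).prodMk measurable_snd)).aestronglyMeasurable
  have haint : ∀ k, Integrable (fun p : (Fin d → ℝ) × (Fin d → ℝ) =>
      v k (twoScale (ε k) p.1 p.2) * ψ (twoScale (ε k) p.1 p.2) p.2) μ := by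
    intro k
    have := (hunfInt k).bdd_mul (hψTm k) (hψTb k)
    simpa [mul_comm] using this
  have hbint : ∀ k, Integrable (fun p : (Fin d → ℝ) × (Fin d → ℝ) =>
      v k (twoScale (ε k) p.1 p.2) * ψ p.1 p.2) μ := by
    intro k
    have := (hunfInt k).bdd_mul hψcont.aestronglyMeasurable
      (hψb.mono fun p hp => by rwa [Real.norm_eq_abs])
    simpa [mul_comm] using this
  -- uniform L¹ bound via Banach–Steinhaus
  obtain ⟨M, hM⟩ := uniform_l1_bound μ
    (fun k p => v k (twoScale (ε k) p.1 p.2)) hunfInt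
    (fun φ hφm hφb => ⟨_, hweak φ hφm hφb⟩)
  have hM0 : 0 ≤ M :=
    le_trans (integral_nonneg fun p => abs_nonneg _) (hM 0)
  -- the correction term tends to zero
  have hdiff : Tendsto (fun k =>
      (∫ p, v k (twoScale (ε k) p.1 p.2) * ψ (twoScale (ε k) p.1 p.2) p.2 ∂μ)
      - ∫ p, v k (twoScale (ε k) p.1 p.2) * ψ p.1 p.2 ∂μ) atTop (𝓝 0) := by
    rw [NormedAddCommGroup.tendsto_nhds_zero]
    intro δ hδ
    have hM1 : (0 : ℝ) < M + 1 := by linarith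
    set δ' : ℝ := δ / (2 * (M + 1)) with hδ'
    have hδ'pos : 0 < δ' := by positivity
    obtain ⟨η, hηpos, hηimp⟩ := Metric.uniformContinuous_iff.1 hHuc δ' hδ'pos
    have hev : ∀ᶠ k in atTop, ε k < η / 2 :=
      hε0.eventually (gt_mem_nhds (show (0:ℝ) < η / 2 by positivity))
    filter_upwards [hev] with k hk
    -- pointwise a.e. bound on the difference
    have hptwise : ∀ᵐ p ∂μ, ‖v k (twoScale (ε k) p.1 p.2)
        * (ψ (twoScale (ε k) p.1 p.2) p.2 - ψ p.1 p.2)‖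
        ≤ |v k (twoScale (ε k) p.1 p.2)| * δ' := by
      filter_upwards [haeY] with p hp
      rw [norm_mul, Real.norm_eq_abs, Real.norm_eq_abs]
      refine mul_le_mul_of_nonneg_left ?_ (abs_nonneg _)
      have hyIcc := hIccY _ hp
      rw [← hHeq _ p.2 hyIcc, ← hHeq p.1 p.2 hyIcc]
      have hdist : dist ((twoScale (ε k) p.1 p.2, p.2))
          ((p.1, p.2) : (Fin d → ℝ) × (Fin d → ℝ)) < η := by
        rw [Prod.dist_eq, dist_self]
        have hd1 : dist (twoScale (ε k) p.1 p.2) p.1 ≤ ε k := by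
          rw [dist_pi_le_iff (hεpos k).le]
          intro i
          rw [Real.dist_eq]
          unfold twoScale
          have hy := hp i (mem_univ i)
          have hlow : ε k * (⌊p.1 i / ε k⌋ : ℝ) ≤ p.1 i := by
            rw [← le_div_iff₀' (hεpos k)]; exact Int.floor_le _
          have hhigh : p.1 i < ε k * (⌊p.1 i / ε k⌋ : ℝ) + ε k := by
            have := Int.lt_floor_add_one (p.1 i / ε k)
            rw [div_lt_iff₀' (hεpos k)] at this
            nlinarith [this]
          have hy1 : 0 < ε k * p.2 i := mul_pos (hεpos k) hy.1
          have hy2 : ε k * p.2 i < ε k := by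
            nlinarith [hy.2, hεpos k]
          rw [abs_le]
          constructor
          · nlinarith
          · nlinarith
        calc max (dist (twoScale (ε k) p.1 p.2) p.1) 0
            ≤ max (ε k) 0 := max_le_max hd1 le_rfl
          _ = ε k := max_eq_left (hεpos k).le
          _ < η := by linarith
      have := hηimp hdist
      rw [Real.dist_eq] at this
      exact this.le
    have hsub : Integrable (fun p : (Fin d → ℝ) × (Fin d → ℝ) =>
        v k (twoScale (ε k) p.1 p.2)
          * (ψ (twoScale (ε k) p.1 p.2) p.2 - ψ p.1 p.2)) μ := by
      have := (haint k).sub (hbint k)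
      refine this.congr (Filter.Eventually.of_forall fun p => ?_)
      simp only [Pi.sub_apply]
      ring
    have heqd : (∫ p, v k (twoScale (ε k) p.1 p.2) * ψ (twoScale (ε k) p.1 p.2) p.2 ∂μ)
        - ∫ p, v k (twoScale (ε k) p.1 p.2) * ψ p.1 p.2 ∂μ
        = ∫ p, v k (twoScale (ε k) p.1 p.2)
            * (ψ (twoScale (ε k) p.1 p.2) p.2 - ψ p.1 p.2) ∂μ := by
      rw [← integral_sub (haint k) (hbint k)]
      refine integral_congr_ae (Filter.Eventually.of_forall fun p => ?_)
      ring
    rw [heqd]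
    calc ‖∫ p, v k (twoScale (ε k) p.1 p.2)
            * (ψ (twoScale (ε k) p.1 p.2) p.2 - ψ p.1 p.2) ∂μ‖
        ≤ ∫ p, ‖v k (twoScale (ε k) p.1 p.2)
            * (ψ (twoScale (ε k) p.1 p.2) p.2 - ψ p.1 p.2)‖ ∂μ :=
          norm_integral_le_integral_norm _
      _ ≤ ∫ p, |v k (twoScale (ε k) p.1 p.2)| * δ' ∂μ :=
          integral_mono_ae hsub.norm ((hunfInt k).abs.mul_const _) hptwise
      _ = (∫ p, |v k (twoScale (ε k) p.1 p.2)| ∂μ) * δ' := integral_mul_const _ _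
      _ ≤ M * δ' := mul_le_mul_of_nonneg_right (hM k) hδ'pos.le
      _ ≤ (M + 1) * δ' := by nlinarith
      _ = δ / 2 := by rw [hδ']; field_simp
      _ < δ := by linarith
  -- combine
  have hfinal : Tendsto (fun k =>
      ∫ p, v k (twoScale (ε k) p.1 p.2) * ψ (twoScale (ε k) p.1 p.2) p.2 ∂μ) atTop
      (𝓝 (∫ p, v0 p.1 p.2 * ψ p.1 p.2 ∂μ)) := by
    have := hbconv.add hdiff
    simp only [add_zero] at this
    refine this.congr fun k => ?_
    ring
  rw [← hRHS]
  have hfun : (fun k => ∫ x, v k x * ψ x (fun i => x i / ε k))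
      = fun k => ∫ p, v k (twoScale (ε k) p.1 p.2)
          * ψ (twoScale (ε k) p.1 p.2) p.2 ∂μ := funext hLHS
  rw [hfun]
  exact hfinal
end

section
/- Let d, N ≥ 1 and Y = (0,1)^d. Let M* : ℝ^d × ℝ^{d×N} → [0,∞) be Carathéodory and ℤ^d-periodic in its first variable, such that M*(y,·) is convex and even for a.e. y, and suppose there are N-function profiles μ₁, μ₂ with μ₁(|ξ|) ≤ M*(y,ξ) ≤ μ₂(|ξ|) for a.e. y and every ξ ∈ ℝ^{d×N}. Define h* : ℝ^{d×N} → [0,∞) by h*(ξ) = inf { ∫_Y M*(y, ξ + W(y)) dy : W ∈ C^∞(ℝ^d; ℝ^{d×N}) ℤ^d-periodic, ∑_{i=1}^d ∂_{y_i} W_{ij}(y) = 0 on ℝ^d for each j = 1,…,N, and ∫_Y W(y) dy = 0 }. Then h* is real-valued, μ₁(|ξ|) ≤ h*(ξ) ≤ μ₂(|ξ|) for all ξ, and h* is an N-function: (1) h*(ξ) = 0 if and only if ξ = 0; (2) h*(−ξ) = h*(ξ); (3) h* is convex; (4) h*(ξ)/|ξ| → 0 as ξ → 0 and h*(ξ)/|ξ|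 → ∞ as |ξ| → ∞. -/
open MeasureTheory Set Filter Topology

/-- An `N`-function profile: a convex `m : [0,∞) → [0,∞)` vanishing exactly at `0`,
with `m(t)/t → 0` as `t → 0⁺` and `m(t)/t → ∞` as `t → ∞`. -/
def IsNFunctionProfile (m : ℝ → ℝ) : Prop :=
  ConvexOn ℝ (Ici 0) m ∧ (∀ t, 0 ≤ t → 0 ≤ m t) ∧
    (∀ t, 0 ≤ t → (m t = 0 ↔ t = 0)) ∧
    Tendsto (fun t => m t / t) (𝓝[>] 0) (𝓝 0) ∧
    Tendsto (fun t => m t / t) atTop atTop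

/-- A matrix field `W : ℝ^d → ℝ^{d×N}` is columnwise divergence-free:
`∑_{i=1}^d ∂_{y_i} W_{ij}(y) = 0` for every `j` and every `y`. -/
def DivergenceFree {d N : ℕ} (W : (Fin d → ℝ) → EuclideanSpace ℝ (Fin d × Fin N)) : Prop :=
  ∀ (j : Fin N) (y : Fin d → ℝ),
    (∑ i : Fin d, fderiv ℝ (fun z => W z (i, j)) y (Pi.single i 1)) = 0

lemma profile_zero {m : ℝ → ℝ} (h : IsNFunctionProfile m) : m 0 = 0 :=
  (h.2.2.1 0 le_rfl).mpr rfl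

lemma profile_monoOn {m : ℝ → ℝ} (h : IsNFunctionProfile m) : MonotoneOn m (Ici 0) := by
  rintro s (hs : (0:ℝ) ≤ s) t (ht : (0:ℝ) ≤ t) hst
  rcases hst.eq_or_lt with rfl | hlt
  · exact le_rfl
  have ht0 : 0 < t := lt_of_le_of_lt hs hlt
  have hdiv : s / t ≤ 1 := (div_le_one ht0).mpr hst
  have h1 : 0 ≤ 1 - s / t := by linarith
  have h2 : 0 ≤ s / t := div_nonneg hs ht0.le
  have key := h.1.2 (mem_Ici.mpr le_rfl) (mem_Ici.mpr ht) h1 h2 (by ring)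
  simp only [smul_eq_mul, smul_zero, zero_add, profile_zero h, mul_zero] at key
  rw [div_mul_cancel₀ _ ht0.ne'] at key
  refine key.trans ?_
  have hmt : 0 ≤ m t := h.2.1 t ht
  nlinarith

lemma profile_comp_norm_convexOn {m : ℝ → ℝ} (h : IsNFunctionProfile m)
    {E : Type*} [NormedAddCommGroup E] [NormedSpace ℝ E] :
    ConvexOn ℝ univ (fun x : E => m ‖x‖) := by
  refine ⟨convex_univ, fun x _ y _ a b ha hb hab => ?_⟩
  have h1 : ‖a • x + b • y‖ ≤ a * ‖x‖ + b * ‖y‖ := by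
    calc ‖a • x + b • y‖ ≤ ‖a • x‖ + ‖b • y‖ := norm_add_le _ _
    _ = a * ‖x‖ + b * ‖y‖ := by
        rw [norm_smul, norm_smul, Real.norm_eq_abs, Real.norm_eq_abs,
          abs_of_nonneg ha, abs_of_nonneg hb]
  have h2 : m ‖a • x + b • y‖ ≤ m (a * ‖x‖ + b * ‖y‖) :=
    profile_monoOn h (mem_Ici.mpr (norm_nonneg _)) (mem_Ici.mpr (by positivity)) h1
  refine h2.trans ?_
  simpa using h.1.2 (mem_Ici.mpr (norm_nonneg x)) (mem_Ici.mpr (norm_nonneg y)) ha hb hab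

lemma measurable_comp_simpleFunc {α E : Type*} [MeasurableSpace α]
    (F : α → E → ℝ) (hF : ∀ c, Measurable fun y => F y c)
    (s : SimpleFunc α E) : Measurable fun y => F y (s y) := by
  classical
  have hrw : (fun y => F y (s y)) =
      fun y => ∑ c ∈ s.range, (s ⁻¹' {c}).indicator (fun y => F y c) y := by
    funext y
    rw [Finset.sum_eq_single (s y)]
    · exact (Set.indicator_of_mem rfl _).symm
    · intro b _ hb
      have hnm : y ∉ ⇑s ⁻¹' {b} :=
        fun hmem => hb (Set.mem_singleton_iff.mp hmem).symm
      exact Set.indicator_of_notMem hnm _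
    · intro h; exact absurd (SimpleFunc.mem_range_self s y) h
  rw [hrw]
  exact Finset.measurable_sum _ fun c _ =>
    (hF c).indicator (s.measurableSet_fiber c)

lemma continuous_integrableOn_unitCell {d : ℕ} {F : Type*} [NormedAddCommGroup F]
    {f : (Fin d → ℝ) → F} (hf : Continuous f) :
    IntegrableOn f (unitCell d) (volume : Measure (Fin d → ℝ)) := by
  have hK : IsCompact (univ.pi fun _ : Fin d => Icc (0:ℝ) 1) :=
    isCompact_univ_pi fun _ => isCompact_Icc
  exact (hf.continuousOn.integrableOn_compact hK).mono_set
    fun y hy i hi => Ioo_subset_Icc_self (hy i hi)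

lemma volume_unitCell (d : ℕ) : (volume : Measure (Fin d → ℝ)) (unitCell d) = 1 := by
  rw [unitCell, volume_pi_pi]
  simp

/-- **The homogenized dual integrand `h*` is an `N`-function** (the paper's Lemma 2.6,
with the infimum taken over smooth, `ℤ^d`-periodic, columnwise divergence-free,
mean-zero matrix fields). -/
theorem homogenized_hStar_is_NFunction
    (d N : ℕ) (hd : 1 ≤ d) (hN : 1 ≤ N)
    (Mstar : (Fin d → ℝ) → EuclideanSpace ℝ (Fin d × Fin N) → ℝ)
    (hMmeas : ∀ ξ, Measurable fun y => Mstar y ξ)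
    (hMcont : ∀ᵐ y ∂(volume : Measure (Fin d → ℝ)), Continuous (Mstar y))
    (hMper : ∀ (y : Fin d → ℝ) (ξ) (k : Fin d → ℤ),
      Mstar (y + fun i => (k i : ℝ)) ξ = Mstar y ξ)
    (hMconv : ∀ᵐ y ∂(volume : Measure (Fin d → ℝ)), ConvexOn ℝ univ (Mstar y))
    (hMeven : ∀ᵐ y ∂(volume : Measure (Fin d → ℝ)), ∀ ξ, Mstar y (-ξ) = Mstar y ξ)
    (μ₁ μ₂ : ℝ → ℝ) (hμ₁ : IsNFunctionProfile μ₁) (hμ₂ : IsNFunctionProfile μ₂)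
    (hsand : ∀ᵐ y ∂(volume : Measure (Fin d → ℝ)),
      ∀ ξ, μ₁ ‖ξ‖ ≤ Mstar y ξ ∧ Mstar y ξ ≤ μ₂ ‖ξ‖)
    (hstar : EuclideanSpace ℝ (Fin d × Fin N) → ℝ)
    (hhstar : ∀ ξ, hstar ξ = sInf {r : ℝ |
      ∃ W : (Fin d → ℝ) → EuclideanSpace ℝ (Fin d × Fin N),
        ContDiff ℝ (⊤ : ℕ∞) W ∧
        (∀ (y : Fin d → ℝ) (k : Fin d → ℤ), W (y + fun i => (k i : ℝ)) = W y) ∧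
        DivergenceFree W ∧
        (∫ y in unitCell d, W y) = 0 ∧
        r = ∫ y in unitCell d, Mstar y (ξ + W y)}) :
    (∀ ξ, μ₁ ‖ξ‖ ≤ hstar ξ ∧ hstar ξ ≤ μ₂ ‖ξ‖) ∧
    (∀ ξ, hstar ξ = 0 ↔ ξ = 0) ∧
    (∀ ξ, hstar (-ξ) = hstar ξ) ∧
    ConvexOn ℝ univ hstar ∧
    Tendsto (fun ξ => hstar ξ / ‖ξ‖)
      (𝓝[≠] (0 : EuclideanSpace ℝ (Fin d × Fin N))) (𝓝 0) ∧
    Tendsto (fun ξ => hstar ξ / ‖ξ‖)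
      (comap (fun ξ : EuclideanSpace ℝ (Fin d × Fin N) => ‖ξ‖) atTop) atTop := by
  classical
  have hYmeas : MeasurableSet (unitCell d) :=
    MeasurableSet.univ_pi fun _ => measurableSet_Ioo
  haveI hprob : IsProbabilityMeasure ((volume : Measure (Fin d → ℝ)).restrict (unitCell d)) :=
    ⟨by rw [Measure.restrict_apply_univ]; exact volume_unitCell d⟩
  set S : EuclideanSpace ℝ (Fin d × Fin N) → Set ℝ := fun ξ => {r : ℝ |
      ∃ W : (Fin d → ℝ) → EuclideanSpace ℝ (Fin d × Fin N),
        ContDiff ℝ (⊤ : ℕ∞) W ∧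
        (∀ (y : Fin d → ℝ) (k : Fin d → ℤ), W (y + fun i => (k i : ℝ)) = W y) ∧
        DivergenceFree W ∧
        (∫ y in unitCell d, W y) = 0 ∧
        r = ∫ y in unitCell d, Mstar y (ξ + W y)} with hSdef
  have hhstar' : ∀ ξ, hstar ξ = sInf (S ξ) := hhstar
  -- integrability of the composed integrand
  have hInt : ∀ (ξ : EuclideanSpace ℝ (Fin d × Fin N))
      (W : (Fin d → ℝ) → EuclideanSpace ℝ (Fin d × Fin N)), Continuous W →
      Integrable (fun y => Mstar y (ξ + W y))
        ((volume : Measure (Fin d → ℝ)).restrict (unitCell d)) := by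
    intro ξ W hW
    have hK : IsCompact (univ.pi fun _ : Fin d => Icc (0:ℝ) 1) :=
      isCompact_univ_pi fun _ => isCompact_Icc
    obtain ⟨B, hBle⟩ := hK.exists_bound_of_continuousOn hW.continuousOn
    have hsub : unitCell d ⊆ univ.pi fun _ : Fin d => Icc (0:ℝ) 1 :=
      fun y hy i hi => Ioo_subset_Icc_self (hy i hi)
    have hsm : StronglyMeasurable fun y => ξ + W y :=
      (continuous_const.add hW).stronglyMeasurable
    have haem : AEMeasurable (fun y => Mstar y (ξ + W y))
        (volume : Measure (Fin d → ℝ)) := by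
      refine aemeasurable_of_tendsto_metrizable_ae'
        (f := fun n y => Mstar y (hsm.approx n y))
        (fun n => (measurable_comp_simpleFunc Mstar hMmeas (hsm.approx n)).aemeasurable) ?_
      filter_upwards [hMcont] with y hy
      exact (hy.tendsto _).comp (hsm.tendsto_approx y)
    refine Integrable.mono' (g := fun _ => μ₂ (‖ξ‖ + B)) (integrable_const _)
      haem.restrict.aestronglyMeasurable ?_
    filter_upwards [ae_restrict_of_ae hsand, ae_restrict_mem hYmeas] with y hy hyY
    have hWb : ‖W y‖ ≤ B := hBle _ (hsub hyY)
    have hnorm : ‖ξ + W y‖ ≤ ‖ξ‖ + B := (norm_add_le _ _).trans (by linarith)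
    have h0 : 0 ≤ Mstar y (ξ + W y) :=
      le_trans (hμ₁.2.1 _ (norm_nonneg _)) (hy (ξ + W y)).1
    rw [Real.norm_eq_abs, abs_of_nonneg h0]
    exact (hy (ξ + W y)).2.trans (profile_monoOn hμ₂ (mem_Ici.mpr (norm_nonneg _))
      (mem_Ici.mpr (le_trans (norm_nonneg _) hnorm)) hnorm)
  -- Jensen lower bound
  have hLB : ∀ (ξ : EuclideanSpace ℝ (Fin d × Fin N))
      (W : (Fin d → ℝ) → EuclideanSpace ℝ (Fin d × Fin N)), ContDiff ℝ (⊤ : ℕ∞) W →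
      (∫ y in unitCell d, W y) = 0 →
      μ₁ ‖ξ‖ ≤ ∫ y in unitCell d, Mstar y (ξ + W y) := by
    intro ξ W hWsm hW0
    have hW : Continuous W := hWsm.continuous
    have hWint : IntegrableOn W (unitCell d) volume := continuous_integrableOn_unitCell hW
    have hfi : Integrable (fun y => ξ + W y)
        ((volume : Measure (Fin d → ℝ)).restrict (unitCell d)) :=
      (integrable_const ξ).add hWint
    have hmean : (∫ y in unitCell d, (ξ + W y)) = ξ := by
      rw [integral_add (integrable_const ξ) hWint, hW0, add_zero, integral_const]
      simp
    have hg1conv : ConvexOn ℝ univ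
        (fun x : EuclideanSpace ℝ (Fin d × Fin N) => μ₁ ‖x‖) :=
      profile_comp_norm_convexOn hμ₁
    have hg1cont : ContinuousOn
        (fun x : EuclideanSpace ℝ (Fin d × Fin N) => μ₁ ‖x‖) univ :=
      hg1conv.continuousOn isOpen_univ
    have hgfi : Integrable
        ((fun x : EuclideanSpace ℝ (Fin d × Fin N) => μ₁ ‖x‖) ∘ fun y => ξ + W y)
        ((volume : Measure (Fin d → ℝ)).restrict (unitCell d)) := by
      have hc : Continuous
          ((fun x : EuclideanSpace ℝ (Fin d × Fin N) => μ₁ ‖x‖) ∘ fun y => ξ + W y) :=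
        (continuousOn_univ.mp hg1cont).comp (continuous_const.add hW)
      exact continuous_integrableOn_unitCell hc
    have hjen := hg1conv.map_integral_le hg1cont isClosed_univ
      (Eventually.of_forall fun _ => mem_univ _) hfi hgfi
    simp only [hmean] at hjen
    refine hjen.trans ?_
    refine integral_mono_of_nonneg
      (Eventually.of_forall fun y => hμ₁.2.1 _ (norm_nonneg _)) (hInt ξ W hW) ?_
    filter_upwards [ae_restrict_of_ae hsand] with y hy
    exact (hy (ξ + W y)).1
  -- membership of the zero competitor
  have hmemS : ∀ ξ : EuclideanSpace ℝ (Fin d × Fin N),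
      (∫ y in unitCell d,
        Mstar y (ξ + (fun _ : Fin d → ℝ => (0 : EuclideanSpace ℝ (Fin d × Fin N))) y)) ∈ S ξ := by
    intro ξ
    refine ⟨fun _ => 0, contDiff_const, fun _ _ => rfl, ?_, by simp, rfl⟩
    intro j y
    simp
  have hS_lb : ∀ ξ, ∀ r ∈ S ξ, μ₁ ‖ξ‖ ≤ r := by
    rintro ξ r ⟨W, hWsm, -, -, hW0, rfl⟩
    exact hLB ξ W hWsm hW0
  have hbdd : ∀ ξ, BddBelow (S ξ) := fun ξ => ⟨μ₁ ‖ξ‖, fun r hr => hS_lb ξ r hr⟩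
  have hne : ∀ ξ, (S ξ).Nonempty := fun ξ => ⟨_, hmemS ξ⟩
  -- sandwich
  have hsandw : ∀ ξ, μ₁ ‖ξ‖ ≤ hstar ξ ∧ hstar ξ ≤ μ₂ ‖ξ‖ := by
    intro ξ
    constructor
    · rw [hhstar' ξ]; exact le_csInf (hne ξ) (hS_lb ξ)
    · rw [hhstar' ξ]
      refine (csInf_le (hbdd ξ) (hmemS ξ)).trans ?_
      have hb : (∫ y in unitCell d,
          Mstar y (ξ + (fun _ : Fin d → ℝ => (0 : EuclideanSpace ℝ (Fin d × Fin N))) y))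
          ≤ ∫ _y in unitCell d, μ₂ ‖ξ‖ := by
        refine integral_mono_of_nonneg ?_ (integrable_const _) ?_
        · filter_upwards [ae_restrict_of_ae hsand] with y hy
          exact le_trans (hμ₁.2.1 _ (norm_nonneg _)) (hy _).1
        · filter_upwards [ae_restrict_of_ae hsand] with y hy
          simpa using (hy (ξ + 0)).2
      refine hb.trans ?_
      simp
  -- evenness
  have hSsubset : ∀ ξ, S ξ ⊆ S (-ξ) := by
    rintro ξ r ⟨W, hWsm, hper, hdiv, hW0, rfl⟩
    have hWd : ∀ p : Fin d × Fin N, Differentiable ℝ fun z : Fin d → ℝ => W z p := by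
      intro p
      have h := (EuclideanSpace.proj (𝕜 := ℝ) p).differentiable.comp
        (hWsm.differentiable (by simp))
      have hfun : (⇑(EuclideanSpace.proj (𝕜 := ℝ) p) ∘ W) = fun z => W z p := by
        funext z; simp [Function.comp]
      rwa [hfun] at h
    refine ⟨fun y => -W y, hWsm.neg, fun y k => by simp only []; rw [hper y k], ?_, ?_, ?_⟩
    · intro j y
      have e : ∀ i : Fin d,
          (fun z : Fin d → ℝ => (fun y => -W y) z (i, j)) = fun z => -(W z (i, j)) :=
        fun i => rfl
      calc ∑ i : Fin d, fderiv ℝ (fun z => (fun y => -W y) z (i, j)) y (Pi.single i 1)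
          = ∑ i : Fin d, -(fderiv ℝ (fun z => W z (i, j)) y (Pi.single i 1)) := by
            refine Finset.sum_congr rfl fun i _ => ?_
            rw [e i, fderiv_fun_neg]
            simp
        _ = 0 := by rw [Finset.sum_neg_distrib, hdiv j y, neg_zero]
    · rw [show (∫ y in unitCell d, (fun y => -W y) y) = ∫ y in unitCell d, -W y from rfl,
        integral_neg, hW0, neg_zero]
    · refine (integral_congr_ae ?_).symm
      filter_upwards [ae_restrict_of_ae hMeven] with y hy
      rw [show -ξ + (fun y => -W y) y = -(ξ + W y) from (neg_add ξ (W y)).symm, hy]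
  have hSeq : ∀ ξ, S (-ξ) = S ξ := fun ξ =>
    Subset.antisymm (by simpa using hSsubset (-ξ)) (hSsubset ξ)
  -- convexity
  have hconv : ConvexOn ℝ univ hstar := by
    refine ⟨convex_univ, ?_⟩
    intro ξ₁ _ ξ₂ _ a b ha hb hab
    rcases ha.eq_or_lt with rfl | ha0
    · obtain rfl : b = 1 := by linarith
      simp
    rcases hb.eq_or_lt with rfl | hb0
    · obtain rfl : a = 1 := by linarith
      simp
    simp only [smul_eq_mul]
    refine le_of_forall_pos_le_add fun ε hε => ?_
    obtain ⟨r₁, hr₁S, hr₁lt⟩ := Real.lt_sInf_add_pos (hne ξ₁) (half_pos hε)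
    obtain ⟨r₂, hr₂S, hr₂lt⟩ := Real.lt_sInf_add_pos (hne ξ₂) (half_pos hε)
    obtain ⟨W₁, hW₁sm, hW₁per, hW₁div, hW₁0, rfl⟩ := hr₁S
    obtain ⟨W₂, hW₂sm, hW₂per, hW₂div, hW₂0, rfl⟩ := hr₂S
    set W : (Fin d → ℝ) → EuclideanSpace ℝ (Fin d × Fin N) :=
      fun y => a • W₁ y + b • W₂ y with hWdef
    have hWd : ∀ (V : (Fin d → ℝ) → EuclideanSpace ℝ (Fin d × Fin N)),
        ContDiff ℝ (⊤ : ℕ∞) V → ∀ p : Fin d × Fin N,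
        Differentiable ℝ fun z : Fin d → ℝ => V z p := by
      intro V hV p
      have h := (EuclideanSpace.proj (𝕜 := ℝ) p).differentiable.comp
        (hV.differentiable (by simp))
      have hfun : (⇑(EuclideanSpace.proj (𝕜 := ℝ) p) ∘ V) = fun z => V z p := by
        funext z; simp [Function.comp]
      rwa [hfun] at h
    have hWsm : ContDiff ℝ (⊤ : ℕ∞) W := (hW₁sm.const_smul a).add (hW₂sm.const_smul b)
    have hWper : ∀ (y : Fin d → ℝ) (k : Fin d → ℤ),
        W (y + fun i => (k i : ℝ)) = W y := by
      intro y k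
      simp only [hWdef]
      rw [hW₁per y k, hW₂per y k]
    have hWdiv : DivergenceFree W := by
      intro j y
      calc ∑ i : Fin d, fderiv ℝ (fun z => W z (i, j)) y (Pi.single i 1)
          = ∑ i : Fin d, (a * fderiv ℝ (fun z => W₁ z (i, j)) y (Pi.single i 1)
              + b * fderiv ℝ (fun z => W₂ z (i, j)) y (Pi.single i 1)) := by
            refine Finset.sum_congr rfl fun i _ => ?_
            have e : (fun z : Fin d → ℝ => W z (i, j))
                = fun z => a * W₁ z (i, j) + b * W₂ z (i, j) := by
              funext z
              simp [hWdef, PiLp.add_apply, PiLp.smul_apply, smul_eq_mul]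
            rw [e, fderiv_fun_add ((hWd W₁ hW₁sm (i, j) y).const_mul a)
              ((hWd W₂ hW₂sm (i, j) y).const_mul b),
              fderiv_const_mul (hWd W₁ hW₁sm (i, j) y) a,
              fderiv_const_mul (hWd W₂ hW₂sm (i, j) y) b]
            simp
        _ = a * (∑ i : Fin d, fderiv ℝ (fun z => W₁ z (i, j)) y (Pi.single i 1))
            + b * (∑ i : Fin d, fderiv ℝ (fun z => W₂ z (i, j)) y (Pi.single i 1)) := by
            rw [Finset.sum_add_distrib, Finset.mul_sum, Finset.mul_sum]
        _ = 0 := by rw [hW₁div j y, hW₂div j y]; ring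
    have hW0 : (∫ y in unitCell d, W y) = 0 := by
      simp only [hWdef]
      rw [integral_add
        (continuous_integrableOn_unitCell (f := fun y => a • W₁ y) (hW₁sm.continuous.const_smul a))
        (continuous_integrableOn_unitCell (f := fun y => b • W₂ y) (hW₂sm.continuous.const_smul b)),
        integral_smul, integral_smul, hW₁0, hW₂0, smul_zero, smul_zero, add_zero]
    have hmem : (∫ y in unitCell d, Mstar y ((a • ξ₁ + b • ξ₂) + W y)) ∈ S (a • ξ₁ + b • ξ₂) :=
      ⟨W, hWsm, hWper, hWdiv, hW0, rfl⟩
    have hint1 := hInt ξ₁ W₁ hW₁sm.continuous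
    have hint2 := hInt ξ₂ W₂ hW₂sm.continuous
    have hmono : (∫ y in unitCell d, Mstar y ((a • ξ₁ + b • ξ₂) + W y))
        ≤ ∫ y in unitCell d,
            (a * Mstar y (ξ₁ + W₁ y) + b * Mstar y (ξ₂ + W₂ y)) := by
      refine integral_mono_of_nonneg ?_ ((hint1.const_mul a).add (hint2.const_mul b)) ?_
      · filter_upwards [ae_restrict_of_ae hsand] with y hy
        exact le_trans (hμ₁.2.1 _ (norm_nonneg _)) (hy _).1
      · filter_upwards [ae_restrict_of_ae hMconv] with y hy
        have e : (a • ξ₁ + b • ξ₂) + W y = a • (ξ₁ + W₁ y) + b • (ξ₂ + W₂ y) := by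
          simp only [hWdef]
          rw [smul_add, smul_add]
          abel
        rw [e]
        simpa using hy.2 (mem_univ (ξ₁ + W₁ y)) (mem_univ (ξ₂ + W₂ y)) ha hb hab
    have hsum : (∫ y in unitCell d,
          (a * Mstar y (ξ₁ + W₁ y) + b * Mstar y (ξ₂ + W₂ y)))
        = a * (∫ y in unitCell d, Mstar y (ξ₁ + W₁ y))
          + b * (∫ y in unitCell d, Mstar y (ξ₂ + W₂ y)) := by
      rw [integral_add (hint1.const_mul a) (hint2.const_mul b),
        integral_const_mul, integral_const_mul]
    have hle : hstar (a • ξ₁ + b • ξ₂)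
        ≤ a * (∫ y in unitCell d, Mstar y (ξ₁ + W₁ y))
          + b * (∫ y in unitCell d, Mstar y (ξ₂ + W₂ y)) := by
      rw [hhstar']
      exact (csInf_le (hbdd _) hmem).trans (hmono.trans (le_of_eq hsum))
    rw [hhstar' ξ₁, hhstar' ξ₂]
    nlinarith [hle, hr₁lt, hr₂lt]
  refine ⟨hsandw, ?_, ?_, hconv, ?_, ?_⟩
  · -- vanishing exactly at 0
    intro ξ
    constructor
    · intro h0
      have h1 : μ₁ ‖ξ‖ ≤ 0 := h0 ▸ (hsandw ξ).1
      have h2 : μ₁ ‖ξ‖ = 0 := le_antisymm h1 (hμ₁.2.1 _ (norm_nonneg _))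
      have := (hμ₁.2.2.1 ‖ξ‖ (norm_nonneg _)).mp h2
      exact norm_eq_zero.mp this
    · rintro rfl
      have h1 := (hsandw 0).1
      have h2 := (hsandw 0).2
      rw [norm_zero, profile_zero hμ₁] at h1
      rw [norm_zero, profile_zero hμ₂] at h2
      exact le_antisymm h2 h1
  · -- evenness
    intro ξ
    rw [hhstar' (-ξ), hhstar' ξ, hSeq ξ]
  · -- limit at 0
    have hnormto : Tendsto (fun ξ : EuclideanSpace ℝ (Fin d × Fin N) => ‖ξ‖)
        (𝓝[≠] (0 : EuclideanSpace ℝ (Fin d × Fin N))) (𝓝[>] 0) := by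
      refine tendsto_nhdsWithin_iff.mpr ⟨?_, ?_⟩
      · simpa using (continuous_norm.tendsto (0 : EuclideanSpace ℝ (Fin d × Fin N))).mono_left
          nhdsWithin_le_nhds
      · filter_upwards [self_mem_nhdsWithin] with ξ hξ
        exact norm_pos_iff.mpr hξ
    have hupper : Tendsto (fun ξ : EuclideanSpace ℝ (Fin d × Fin N) => μ₂ ‖ξ‖ / ‖ξ‖)
        (𝓝[≠] (0 : EuclideanSpace ℝ (Fin d × Fin N))) (𝓝 0) :=
      hμ₂.2.2.2.1.comp hnormto
    refine tendsto_of_tendsto_of_tendsto_of_le_of_le' tendsto_const_nhds hupper ?_ ?_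
    · filter_upwards [self_mem_nhdsWithin] with ξ hξ
      have hn : (0:ℝ) < ‖ξ‖ := norm_pos_iff.mpr hξ
      exact div_nonneg (le_trans (hμ₁.2.1 _ (norm_nonneg _)) (hsandw ξ).1) hn.le
    · filter_upwards [self_mem_nhdsWithin] with ξ hξ
      have hn : (0:ℝ) < ‖ξ‖ := norm_pos_iff.mpr hξ
      exact (div_le_div_iff_of_pos_right hn).mpr (hsandw ξ).2
  · -- limit at infinity
    have hco : Tendsto (fun ξ : EuclideanSpace ℝ (Fin d × Fin N) => ‖ξ‖)
        (comap (fun ξ : EuclideanSpace ℝ (Fin d × Fin N) => ‖ξ‖) atTop) atTop :=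
      tendsto_comap
    refine tendsto_atTop_mono (fun ξ => ?_) (hμ₁.2.2.2.2.comp hco)
    simp only [Function.comp_apply]
    rcases eq_or_lt_of_le (norm_nonneg ξ) with h0 | h0
    · rw [← h0, div_zero, div_zero]
    · exact (div_le_div_iff_of_pos_right h0).mpr (hsandw ξ).1
end

section
/- Let Σ ⊆ ℝ^d be Lebesgue measurable with finite measure and n ≥ 1. Let A : Σ × ℝ^n → ℝ^n be Carathéodory, monotone in its second variable (⟨A(x,ξ) − A(x,η), ξ − η⟩ ≥ 0 for a.e. x ∈ Σ and all ξ, η ∈ ℝ^n), and locally uniformly bounded: for every R > 0 there exists K > 0 such that |A(x,ξ)| ≤ K for a.e. x ∈ Σ and every ξ with |ξ| ≤ R. Let W, A⁰ ∈ L¹(Σ; ℝ^n) be such that x ↦ ⟨A⁰(x), W(x)⟩ is integrable, and suppose that ∫_Σ ⟨A⁰(x) − A(x, V(x)), W(x) − V(x)⟩ dx ≥ 0 for every essentially bounded measurable V : Σ → ℝ^n. Then A⁰(x) = A(x, W(x)) for a.e. x ∈ Σ. -/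
/-!
Test the Minty inequality with `V = W 1_{‖W‖ ≤ m} + h Z 1_{‖W‖ ≤ l}` for a measurable `Z` with
`‖Z‖ ≤ 1`. On `{‖W‖ ≤ m} \ {‖W‖ ≤ l}` the integrand vanishes, and outside `{‖W‖ ≤ m}` it is
`⟪A0 - A(·, 0), W⟫`, whose integral over that set tends to `0` as `m → ∞`. This leaves
`∫_{‖W‖ ≤ l} ⟪A0 - A(·, W + h Z), Z⟫ ≤ 0` for `h > 0`, and continuity of `A(x, ·)` together with
the local bound on `A` lets `h → 0` by dominated convergence. For `Z` the vector
`A0 - A(·, W)` squeezed into the unit ball, the resulting integrand is nonnegative and vanishes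
only where `A0 = A(·, W)`, so this holds a.e. on every `{‖W‖ ≤ l}`.
-/

open MeasureTheory Set Filter Topology
open scoped RealInnerProductSpace

/-- Modifying `A` on a measurable null set makes it continuous in `ξ` for every `x`, and then
it is jointly measurable. -/
theorem aemeasurable_comp_of_caratheodory {α β γ : Type*} [MeasurableSpace α] {μ : Measure α}
    [TopologicalSpace β] [TopologicalSpace.MetrizableSpace β] [SecondCountableTopology β]
    [MeasurableSpace β] [OpensMeasurableSpace β] [TopologicalSpace γ]
    [TopologicalSpace.PseudoMetrizableSpace γ] [MeasurableSpace γ] [BorelSpace γ]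
    {A : α → β → γ} (hAmeas : ∀ ξ, Measurable fun x => A x ξ)
    (hAcont : ∀ᵐ x ∂μ, Continuous (A x)) {U : α → β} (hU : Measurable U) :
    AEMeasurable (fun x => A x (U x)) μ := by
  classical
  rcases isEmpty_or_nonempty α with hα | ⟨⟨x₀⟩⟩
  · exact Subsingleton.aemeasurable
  set N := toMeasurable μ {x | ¬Continuous (A x)}
  have hN : ∀ᵐ x ∂μ, x ∉ N :=
    measure_eq_zero_iff_ae_notMem.1 ((measure_toMeasurable _).trans (ae_iff.1 hAcont))
  let A' : β → α → γ := fun ξ => N.piecewise (fun x => A x (U x₀)) (fun x => A x ξ)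
  have hA' : Measurable (Function.uncurry A') := by
    refine measurable_uncurry_of_continuous_of_measurable (fun x => ?_)
      (fun ξ => (hAmeas (U x₀)).piecewise (measurableSet_toMeasurable _ _) (hAmeas ξ))
    by_cases hx : x ∈ N
    · simp only [A', piecewise_eq_of_mem _ _ _ hx, continuous_const]
    · simpa only [A', piecewise_eq_of_notMem _ _ _ hx] using
        not_not.1 fun h => hx (subset_toMeasurable _ _ h)
  refine ⟨fun x => A' (U x) x, hA'.comp (hU.prodMk measurable_id), ?_⟩
  filter_upwards [hN] with x hx
  simp only [A', piecewise_eq_of_notMem _ _ _ hx]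

theorem tendsto_setIntegral_setOf_natCast_lt {α : Type*} [MeasurableSpace α] {μ : Measure α}
    {f q : α → ℝ} (hf : Measurable f) (hq : Integrable q μ) :
    Tendsto (fun m : ℕ => ∫ x in {x | (m : ℝ) < f x}, q x ∂μ) atTop (𝓝 0) := by
  have hempty : ⋂ m : ℕ, {x | (m : ℝ) < f x} = ∅ :=
    eq_empty_of_forall_notMem fun x hx =>
      let ⟨m, hm⟩ := exists_nat_ge (f x)
      (mem_iInter.1 hx m).not_ge hm
  simpa [hempty] using tendsto_setIntegral_of_antitone
    (fun m : ℕ => measurableSet_lt measurable_const hf)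
    (fun m k hmk x (hx : (k : ℝ) < f x) => (Nat.cast_le.2 hmk).trans_lt hx) ⟨0, hq.integrableOn⟩

theorem ae_eq_zero_of_setIntegral_nonpos {α : Type*} [MeasurableSpace α] {μ : Measure α}
    {g : α → ℝ} {s : ℕ → Set α} (hcover : ⋃ l, s l = univ) (hg : 0 ≤ g)
    (hint : ∀ l, IntegrableOn g (s l) μ) (hle : ∀ l, ∫ x in s l, g x ∂μ ≤ 0) :
    g =ᵐ[μ] 0 := by
  have h : ∀ l, g =ᵐ[μ.restrict (s l)] 0 := fun l =>
    (integral_eq_zero_iff_of_nonneg hg (hint l)).1 ((hle l).antisymm (integral_nonneg hg))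
  rw [← Measure.restrict_univ (μ := μ), ← hcover]
  exact (ae_restrict_iUnion_iff s _).2 h

variable {α E : Type*} [NormedAddCommGroup E] [InnerProductSpace ℝ E]
  {A : α → E → E} {A0 W Z : α → E}

theorem real_inner_self_coe_unitBall (v : E) :
    ⟪v, (Homeomorph.unitBall v : E)⟫ = (√(1 + ‖v‖ ^ 2))⁻¹ * ‖v‖ ^ 2 := by
  rw [Homeomorph.unitBall_apply_coe, OpenPartialHomeomorph.univUnitBall_apply,
    real_inner_smul_right, real_inner_self_eq_norm_sq]

theorem real_inner_self_coe_unitBall_eq_zero {v : E} :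
    ⟪v, (Homeomorph.unitBall v : E)⟫ = 0 ↔ v = 0 := by
  have : 0 < √(1 + ‖v‖ ^ 2) := by positivity
  simp [real_inner_self_coe_unitBall, this.ne']

theorem norm_inner_sub_le_of_norm_le {a g z : E} {K : ℝ} (hg : ‖g‖ ≤ K) (hz : ‖z‖ ≤ 1) :
    ‖⟪a - g, z⟫‖ ≤ ‖a‖ + K :=
  calc ‖⟪a - g, z⟫‖ ≤ ‖a - g‖ * ‖z‖ := norm_inner_le_norm _ _
    _ ≤ (‖a‖ + K) * 1 :=
      mul_le_mul ((norm_sub_le _ _).trans (by gcongr)) hz (norm_nonneg _)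
        ((norm_nonneg _).trans ((norm_sub_le _ _).trans (by gcongr)))
    _ = ‖a‖ + K := mul_one _

theorem inner_sub_indicator_add_indicator {s t : Set α} (hst : s ⊆ t) (Y : α → E) (x : α) :
    ⟪A0 x - A x (t.indicator W x + s.indicator Y x), W x - (t.indicator W x + s.indicator Y x)⟫
      = s.indicator (fun x => -⟪A0 x - A x (W x + Y x), Y x⟫) x
        + tᶜ.indicator (fun x => ⟪A0 x - A x 0, W x⟫) x := by
  by_cases hs : x ∈ s
  · simp [hs, hst hs]
  · by_cases ht : x ∈ t <;> simp [hs, ht]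

variable [MeasurableSpace α] {μ : Measure α}

theorem integrableOn_inner_sub_of_norm_le [IsFiniteMeasure μ] {G : α → E} {K : ℝ} {s : Set α}
    (hs : MeasurableSet s) (hA0 : Integrable A0 μ) (hG : AEStronglyMeasurable G μ)
    (hGK : ∀ᵐ x ∂μ, x ∈ s → ‖G x‖ ≤ K) (hZ : AEStronglyMeasurable Z μ)
    (hZ1 : ∀ x, ‖Z x‖ ≤ 1) :
    IntegrableOn (fun x => ⟪A0 x - G x, Z x⟫) s μ := by
  refine Integrable.mono' (hA0.norm.add (integrable_const K)).integrableOn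
    ((hA0.1.sub hG).inner hZ).restrict ?_
  filter_upwards [ae_restrict_of_ae hGK, ae_restrict_mem hs] with x hx hxs
  exact norm_inner_sub_le_of_norm_le (hx hxs) (hZ1 x)

theorem integrable_inner_sub_of_norm_le {G : α → E} {K : ℝ}
    (hA0W : Integrable (fun x => ⟪A0 x, W x⟫) μ) (hW : Integrable W μ)
    (hG : AEStronglyMeasurable G μ) (hGK : ∀ᵐ x ∂μ, ‖G x‖ ≤ K) :
    Integrable (fun x => ⟪A0 x - G x, W x⟫) μ := by
  have hGW : Integrable (fun x => ⟪G x, W x⟫) μ := by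
    refine Integrable.mono' (hW.norm.const_mul K) (hG.inner hW.1) ?_
    filter_upwards [hGK] with x hx
    exact (norm_inner_le_norm _ _).trans (mul_le_mul_of_nonneg_right hx (norm_nonneg _))
  refine (hA0W.sub hGW).congr (ae_of_all _ fun x => ?_)
  simp [inner_sub_left]

theorem ae_norm_apply_add_smul_le {l : ℕ} {K : ℝ}
    (hK : ∀ᵐ x ∂μ, ∀ ξ, ‖ξ‖ ≤ l + 1 → ‖A x ξ‖ ≤ K) (hZ1 : ∀ x, ‖Z x‖ ≤ 1) {h : ℝ}
    (h0 : 0 ≤ h) (h1 : h ≤ 1) :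
    ∀ᵐ x ∂μ, x ∈ {x | ‖W x‖ ≤ l} → ‖A x (W x + h • Z x)‖ ≤ K := by
  filter_upwards [hK] with x hx (hxl : ‖W x‖ ≤ l)
  refine hx _ ((norm_add_le _ _).trans (add_le_add hxl ?_))
  rw [norm_smul, Real.norm_of_nonneg h0]
  exact mul_le_one₀ h1 (norm_nonneg _) (hZ1 x)

variable [MeasurableSpace E]

def MintyInequality (μ : Measure α) (A : α → E → E) (A0 W : α → E) : Prop :=
  ∀ V : α → E, Measurable V → (∃ C, ∀ᵐ x ∂μ, ‖V x‖ ≤ C) →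
    0 ≤ ∫ x, ⟪A0 x - A x (V x), W x - V x⟫ ∂μ

theorem MintyInequality.congr_ae (hM : MintyInequality μ A A0 W) {W' : α → E}
    (hW : W =ᵐ[μ] W') : MintyInequality μ A A0 W' := fun V hV hVb =>
  (hM V hV hVb).trans_eq <| integral_congr_ae <| by
    filter_upwards [hW] with x hx
    rw [hx]

variable [BorelSpace E] [SecondCountableTopology E]

theorem integrableOn_inner_apply_add_smul [IsFiniteMeasure μ] (hA0 : Integrable A0 μ)
    (hAmeas : ∀ ξ, Measurable fun x => A x ξ) (hAcont : ∀ᵐ x ∂μ, Continuous (A x))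
    (hW : Measurable W) (hZ : Measurable Z) (hZ1 : ∀ x, ‖Z x‖ ≤ 1) {l : ℕ} {K : ℝ}
    (hK : ∀ᵐ x ∂μ, ∀ ξ, ‖ξ‖ ≤ l + 1 → ‖A x ξ‖ ≤ K) {h : ℝ} (h0 : 0 ≤ h) (h1 : h ≤ 1) :
    IntegrableOn (fun x => ⟪A0 x - A x (W x + h • Z x), Z x⟫) {x | ‖W x‖ ≤ l} μ :=
  integrableOn_inner_sub_of_norm_le (measurableSet_le hW.norm measurable_const) hA0
    (aemeasurable_comp_of_caratheodory hAmeas hAcont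
      (hW.add (hZ.const_smul h))).aestronglyMeasurable
    (ae_norm_apply_add_smul_le hK hZ1 h0 h1) hZ.aestronglyMeasurable hZ1

namespace MintyInequality

/-- Test with `V = W 1_{‖W‖ ≤ m} + h Z 1_{‖W‖ ≤ l}`. -/
theorem mul_setIntegral_le_setIntegral_tail (hM : MintyInequality μ A A0 W)
    (hW : Measurable W) (hZ : Measurable Z) (hZ1 : ∀ x, ‖Z x‖ ≤ 1) {l m : ℕ} (hlm : l ≤ m)
    {h : ℝ} (hh : 0 ≤ h)
    (hp : IntegrableOn (fun x => ⟪A0 x - A x (W x + h • Z x), Z x⟫) {x | ‖W x‖ ≤ l} μ)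
    (hq : Integrable (fun x => ⟪A0 x - A x 0, W x⟫) μ) :
    h * ∫ x in {x | ‖W x‖ ≤ l}, ⟪A0 x - A x (W x + h • Z x), Z x⟫ ∂μ
      ≤ ∫ x in {x | (m : ℝ) < ‖W x‖}, ⟪A0 x - A x 0, W x⟫ ∂μ := by
  set s := {x | ‖W x‖ ≤ l}
  set t := {x | ‖W x‖ ≤ m}
  have hs : MeasurableSet s := measurableSet_le hW.norm measurable_const
  have ht : MeasurableSet t := measurableSet_le hW.norm measurable_const
  have hst : s ⊆ t := fun x (hx : ‖W x‖ ≤ l) => hx.trans (Nat.cast_le.2 hlm)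
  have htc : tᶜ = {x | (m : ℝ) < ‖W x‖} := by ext; simp [t]
  have hVb : ∀ x, ‖t.indicator W x + s.indicator (fun x => h • Z x) x‖ ≤ m + h := by
    intro x
    refine (norm_add_le _ _).trans (add_le_add ?_ ?_) <;> rw [norm_indicator_eq_indicator_norm]
    · exact indicator_apply_le' id fun _ => by positivity
    · refine indicator_apply_le' (fun _ => ?_) fun _ => hh
      simpa [norm_smul, abs_of_nonneg hh] using mul_le_of_le_one_right hh (hZ1 x)
  have hV := hM (fun x => t.indicator W x + s.indicator (fun x => h • Z x) x)
    ((hW.indicator ht).add ((hZ.const_smul h).indicator hs)) ⟨m + h, ae_of_all _ hVb⟩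
  simp_rw [inner_sub_indicator_add_indicator hst, real_inner_smul_right] at hV
  rw [integral_add ?_ (hq.integrableOn.integrable_indicator ht.compl), integral_indicator hs,
    integral_indicator ht.compl, integral_neg, integral_const_mul, htc] at hV
  · linarith
  · exact (integrable_indicator_iff hs).2 (hp.const_mul h).neg

theorem setIntegral_inner_shift_nonpos (hM : MintyInequality μ A A0 W) (hW : Measurable W)
    (hZ : Measurable Z) (hZ1 : ∀ x, ‖Z x‖ ≤ 1) {l : ℕ} {h : ℝ} (hh : 0 < h)
    (hp : IntegrableOn (fun x => ⟪A0 x - A x (W x + h • Z x), Z x⟫) {x | ‖W x‖ ≤ l} μ)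
    (hq : Integrable (fun x => ⟪A0 x - A x 0, W x⟫) μ) :
    ∫ x in {x | ‖W x‖ ≤ l}, ⟪A0 x - A x (W x + h • Z x), Z x⟫ ∂μ ≤ 0 :=
  nonpos_of_mul_nonpos_right (ge_of_tendsto (tendsto_setIntegral_setOf_natCast_lt hW.norm hq)
    (eventually_atTop.2 ⟨l, fun _ hm =>
      hM.mul_setIntegral_le_setIntegral_tail hW hZ hZ1 hm hh.le hp hq⟩)) hh

theorem setIntegral_inner_nonpos [IsFiniteMeasure μ] (hM : MintyInequality μ A A0 W)
    (hA0 : Integrable A0 μ) (hAmeas : ∀ ξ, Measurable fun x => A x ξ)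
    (hAcont : ∀ᵐ x ∂μ, Continuous (A x)) (hW : Measurable W) (hZ : Measurable Z)
    (hZ1 : ∀ x, ‖Z x‖ ≤ 1) {l : ℕ} {K : ℝ} (hK : ∀ᵐ x ∂μ, ∀ ξ, ‖ξ‖ ≤ l + 1 → ‖A x ξ‖ ≤ K)
    (hq : Integrable (fun x => ⟪A0 x - A x 0, W x⟫) μ) :
    ∫ x in {x | ‖W x‖ ≤ l}, ⟪A0 x - A x (W x), Z x⟫ ∂μ ≤ 0 := by
  have hp : ∀ᶠ h in 𝓝[>] (0 : ℝ), 0 < h ∧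
      IntegrableOn (fun x => ⟪A0 x - A x (W x + h • Z x), Z x⟫) {x | ‖W x‖ ≤ l} μ := by
    filter_upwards [Ioc_mem_nhdsGT one_pos] with h hh
    exact ⟨hh.1, integrableOn_inner_apply_add_smul hA0 hAmeas hAcont hW hZ hZ1 hK hh.1.le hh.2⟩
  have hlim : Tendsto (fun h : ℝ => ∫ x in {x | ‖W x‖ ≤ l}, ⟪A0 x - A x (W x + h • Z x), Z x⟫ ∂μ)
      (𝓝[>] 0) (𝓝 (∫ x in {x | ‖W x‖ ≤ l}, ⟪A0 x - A x (W x), Z x⟫ ∂μ)) := by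
    refine tendsto_integral_filter_of_dominated_convergence (fun x => ‖A0 x‖ + K)
      (hp.mono fun h hh => hh.2.1) ?_ (hA0.norm.add (integrable_const K)).integrableOn ?_
    · filter_upwards [Ioc_mem_nhdsGT one_pos] with h hh
      filter_upwards [ae_restrict_of_ae (ae_norm_apply_add_smul_le hK hZ1 hh.1.le hh.2),
        ae_restrict_mem (measurableSet_le hW.norm measurable_const)] with x hx hxl
      exact norm_inner_sub_le_of_norm_le (hx hxl) (hZ1 x)
    · filter_upwards [ae_restrict_of_ae hAcont] with x hx
      have hshift : Tendsto (fun h : ℝ => W x + h • Z x) (𝓝[>] 0) (𝓝 (W x)) :=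
        ((continuous_const.add (continuous_id.smul continuous_const) :
          Continuous fun h : ℝ => W x + h • Z x).tendsto' 0 _ (by simp)).mono_left
          nhdsWithin_le_nhds
      exact (tendsto_const_nhds.sub ((hx.tendsto _).comp hshift)).inner tendsto_const_nhds
  exact le_of_tendsto hlim
    (hp.mono fun h hh => hM.setIntegral_inner_shift_nonpos hW hZ hZ1 hh.1 hh.2 hq)

theorem ae_eq_apply [IsFiniteMeasure μ] (hM : MintyInequality μ A A0 W)
    (hA0 : Integrable A0 μ) (hAmeas : ∀ ξ, Measurable fun x => A x ξ)
    (hAcont : ∀ᵐ x ∂μ, Continuous (A x))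
    (hAbdd : ∀ R : ℝ, 0 < R → ∃ K : ℝ, ∀ᵐ x ∂μ, ∀ ξ, ‖ξ‖ ≤ R → ‖A x ξ‖ ≤ K)
    (hW : Measurable W) (hq : Integrable (fun x => ⟪A0 x - A x 0, W x⟫) μ) :
    ∀ᵐ x ∂μ, A0 x = A x (W x) := by
  obtain ⟨D, hD, hAD⟩ :=
    hA0.aemeasurable.sub (aemeasurable_comp_of_caratheodory hAmeas hAcont hW)
  set Z := fun x => (Homeomorph.unitBall (D x) : E)
  have hZ : Measurable Z :=
    (continuous_subtype_val.comp Homeomorph.unitBall.continuous).measurable.comp hD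
  have hZ1 : ∀ x, ‖Z x‖ ≤ 1 := fun x => (mem_ball_zero_iff.1 (Homeomorph.unitBall (D x)).2).le
  have hDZ : (fun x => ⟪A0 x - A x (W x), Z x⟫) =ᵐ[μ] fun x => ⟪D x, Z x⟫ := by
    filter_upwards [hAD] with x hx
    exact congrArg (⟪·, Z x⟫) hx
  have hcover : ⋃ l : ℕ, {x | ‖W x‖ ≤ l} = univ :=
    eq_univ_of_forall fun x => mem_iUnion.2 (exists_nat_ge ‖W x‖)
  have hDZ0 : (fun x => ⟪D x, Z x⟫) =ᵐ[μ] 0 := by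
    refine ae_eq_zero_of_setIntegral_nonpos hcover (fun x => ?_) (fun l => ?_) fun l => ?_
    · simp only [Pi.zero_apply, Z, real_inner_self_coe_unitBall]
      positivity
    all_goals obtain ⟨K, hK⟩ := hAbdd (l + 1) (by positivity)
    · refine IntegrableOn.congr_fun_ae ?_ (ae_restrict_of_ae hDZ)
      simpa using integrableOn_inner_apply_add_smul hA0 hAmeas hAcont hW hZ hZ1 hK le_rfl
        zero_le_one
    · rw [← integral_congr_ae (ae_restrict_of_ae hDZ)]
      exact hM.setIntegral_inner_nonpos hA0 hAmeas hAcont hW hZ hZ1 hK hq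
  filter_upwards [hDZ0, hAD] with x hx hDx
  rw [← sub_eq_zero]
  exact hDx.trans (real_inner_self_coe_unitBall_eq_zero.1 hx)

end MintyInequality

theorem minty_identification_general
    (d n : ℕ)
    (Sig : Set (Fin d → ℝ)) (hSfin : volume Sig < ⊤)
    (A : (Fin d → ℝ) → EuclideanSpace ℝ (Fin n) → EuclideanSpace ℝ (Fin n))
    (hAmeas : ∀ ξ, Measurable fun x => A x ξ)
    (hAcont : ∀ᵐ x ∂(volume.restrict Sig), Continuous (A x))
    (hAbdd : ∀ R : ℝ, 0 < R → ∃ K : ℝ,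
      ∀ᵐ x ∂(volume.restrict Sig), ∀ ξ, ‖ξ‖ ≤ R → ‖A x ξ‖ ≤ K)
    (W A0 : (Fin d → ℝ) → EuclideanSpace ℝ (Fin n))
    (hWInt : Integrable W (volume.restrict Sig))
    (hA0Int : Integrable A0 (volume.restrict Sig))
    (hpairInt : Integrable (fun x => (inner ℝ (A0 x) (W x) : ℝ)) (volume.restrict Sig))
    (hminty : ∀ V : (Fin d → ℝ) → EuclideanSpace ℝ (Fin n), Measurable V →
      (∃ C, ∀ᵐ x ∂(volume.restrict Sig), ‖V x‖ ≤ C) →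
      0 ≤ ∫ x, (inner ℝ (A0 x - A x (V x)) (W x - V x) : ℝ) ∂(volume.restrict Sig)) :
    ∀ᵐ x ∂(volume.restrict Sig), A0 x = A x (W x) := by
  have : IsFiniteMeasure (volume.restrict Sig) := isFiniteMeasure_restrict.2 hSfin.ne
  obtain ⟨W', hW', hWW'⟩ := hWInt.aemeasurable
  have hM : MintyInequality _ A A0 W' := MintyInequality.congr_ae hminty hWW'
  obtain ⟨K, hK⟩ := hAbdd 1 one_pos
  have hpair' : Integrable (fun x => ⟪A0 x, W' x⟫) (volume.restrict Sig) :=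
    hpairInt.congr (by filter_upwards [hWW'] with x hx; rw [hx])
  have hq := integrable_inner_sub_of_norm_le hpair' (hWInt.congr hWW')
    (hAmeas 0).aestronglyMeasurable (hK.mono fun x hx => hx 0 (by simp))
  filter_upwards [hM.ae_eq_apply hA0Int hAmeas hAcont hAbdd hW' hq, hWW'] with x hx hWx
  rwa [hWx]

/-- **Truncation-based Minty-type identification lemma** (the core of Step 4 of the proof
of the paper's Theorem 1.2 and of the limit identifications in Lemmas 3.1 and 3.2).
Let `A : Σ × ℝ^n → ℝ^n` be Carathéodory, monotone in its second variable, and locally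
uniformly bounded. If `W, A⁰ ∈ L¹(Σ; ℝ^n)` with `⟨A⁰, W⟩` integrable satisfy
`∫_Σ ⟨A⁰ − A(x, V), W − V⟩ dx ≥ 0` for every essentially bounded measurable `V`, then
`A⁰(x) = A(x, W(x))` a.e. on `Σ`. -/
theorem minty_identification
    (d n : ℕ) (hn : 1 ≤ n)
    (Sig : Set (Fin d → ℝ)) (hSm : MeasurableSet Sig) (hSfin : volume Sig < ⊤)
    (A : (Fin d → ℝ) → EuclideanSpace ℝ (Fin n) → EuclideanSpace ℝ (Fin n))
    (hAmeas : ∀ ξ, Measurable fun x => A x ξ)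
    (hAcont : ∀ᵐ x ∂(volume.restrict Sig), Continuous (A x))
    (hAmono : ∀ᵐ x ∂(volume.restrict Sig),
      ∀ ξ η, 0 ≤ (inner ℝ (A x ξ - A x η) (ξ - η) : ℝ))
    (hAbdd : ∀ R : ℝ, 0 < R → ∃ K : ℝ,
      ∀ᵐ x ∂(volume.restrict Sig), ∀ ξ, ‖ξ‖ ≤ R → ‖A x ξ‖ ≤ K)
    (W A0 : (Fin d → ℝ) → EuclideanSpace ℝ (Fin n))
    (hWInt : Integrable W (volume.restrict Sig))
    (hA0Int : Integrable A0 (volume.restrict Sig))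
    (hpairInt : Integrable (fun x => (inner ℝ (A0 x) (W x) : ℝ)) (volume.restrict Sig))
    (hminty : ∀ V : (Fin d → ℝ) → EuclideanSpace ℝ (Fin n), Measurable V →
      (∃ C, ∀ᵐ x ∂(volume.restrict Sig), ‖V x‖ ≤ C) →
      0 ≤ ∫ x, (inner ℝ (A0 x - A x (V x)) (W x - V x) : ℝ) ∂(volume.restrict Sig)) :
    ∀ᵐ x ∂(volume.restrict Sig), A0 x = A x (W x) :=
  minty_identification_general d n Sig hSfin A hAmeas hAcont hAbdd W A0 hWInt hA0Int hpairInt hminty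
end
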